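/- arXiv:1903.08425 — 5 statements merged into one kernel-verified Lean document; each statement's English description precedes it below -/
import Mathlib

section
/- Let 𝒞 be a class of simple graphs that is closed under isomorphism and under taking subgraphs, contains K₁ and K₂, and is closed under taking disjoint unions. Then for every finite simple graph G, the 𝒞-vertex-brittleness satisfies κ_𝒞(G) ≤ 2·e_𝒞(G). -/
/-!
Take a minimum set `F` of edges whose deletion puts `G` into `𝒞`, and partition `E(G)` by
putting each edge of `F` into a part of its own and all other edges into one common part. The
singleton parts are copies of `K₂`, the common part is a subgraph of `G - F`, and a vertex meeting
two parts is an end of an edge of `F`; so at most `2|F|` vertices are brittle.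
-/

open Classical SimpleGraph

/-- A class of (simple) graphs: a predicate on graphs over every vertex type. -/
abbrev GraphClass : Type 1 := ∀ (V : Type), SimpleGraph V → Prop

/-- `C` is closed under isomorphism. -/
def ClosedUnderIso (C : GraphClass) : Prop :=
  ∀ {V W : Type} (G : SimpleGraph V) (H : SimpleGraph W), Nonempty (G ≃g H) → C V G → C W H

/-- `C` is closed under taking subgraphs. -/
def ClosedUnderSubgraphs (C : GraphClass) : Prop :=
  ∀ {V : Type} (G : SimpleGraph V) (H : G.Subgraph), C V G → C ↥H.verts H.coe

/-- `C` is closed under taking disjoint unions. -/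
def ClosedUnderDisjointUnion (C : GraphClass) : Prop :=
  ∀ {V W : Type} (G : SimpleGraph V) (H : SimpleGraph W),
    C V G → C W H → C (V ⊕ W) (G.sum H)

/-- The edit distance from `G` to the (monotone) class `C`: the minimum number of
edges one needs to delete from `G` to obtain a graph in `C` (`⊤` if impossible). -/
noncomputable def editDist (C : GraphClass) {V : Type} (G : SimpleGraph V) : ℕ∞ :=
  sInf {n : ℕ∞ | ∃ F : Set (Sym2 V), F ⊆ G.edgeSet ∧ C V (G.deleteEdges F) ∧ (F.ncard : ℕ∞) = n}

/-- The set of edges of `G` whose two ends receive distinct labels under `f`. -/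
def crossEdges {V : Type} (G : SimpleGraph V) (f : V → ℕ) : Set (Sym2 V) :=
  {e | e ∈ G.edgeSet ∧ ∃ u v : V, e = s(u, v) ∧ f u ≠ f v}

/-- The `C`-edge-brittleness of `G`: the minimum, over partitions of `V(G)`
(given as labellings `f : V → ℕ`) all of whose parts induce subgraphs in `C`,
of the number of edges with ends in distinct parts. -/
noncomputable def edgeBrittleness (C : GraphClass) {V : Type} (G : SimpleGraph V) : ℕ∞ :=
  sInf {n : ℕ∞ | ∃ f : V → ℕ,
    (∀ i : ℕ, C ↥(f ⁻¹' {i}) (G.induce (f ⁻¹' {i}))) ∧ ((crossEdges G f).ncard : ℕ∞) = n}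

/-- Given a labelling `g` of the edges of `G`, the set of vertices incident with
edges in two distinct parts. -/
def brittleVertices {V : Type} (G : SimpleGraph V) (g : Sym2 V → ℕ) : Set V :=
  {v | ∃ e₁ e₂ : Sym2 V, e₁ ∈ G.edgeSet ∧ e₂ ∈ G.edgeSet ∧ v ∈ e₁ ∧ v ∈ e₂ ∧ g e₁ ≠ g e₂}

/-- The vertices incident with an edge of `G` in part `i` of the edge labelling `g`. -/
def partSupport {V : Type} (G : SimpleGraph V) (g : Sym2 V → ℕ) (i : ℕ) : Set V :=
  {v | ∃ e ∈ G.edgeSet, g e = i ∧ v ∈ e}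

/-- The subgraph of `G` induced by the edges in part `i` of the edge labelling `g`
(on its own vertex set: the vertices incident with those edges). -/
def partGraph {V : Type} (G : SimpleGraph V) (g : Sym2 V → ℕ) (i : ℕ) :
    SimpleGraph ↥(partSupport G g i) :=
  (SimpleGraph.fromEdgeSet {e | e ∈ G.edgeSet ∧ g e = i}).induce (partSupport G g i)

/-- The `C`-vertex-brittleness of `G`: the minimum, over partitions of `E(G)`
(given as labellings `g : Sym2 V → ℕ`) all of whose parts induce subgraphs in `C`,
of the number of vertices incident with edges in distinct parts. -/
noncomputable def vertexBrittleness (C : GraphClass) {V : Type} (G : SimpleGraph V) : ℕ∞ :=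
  sInf {n : ℕ∞ | ∃ g : Sym2 V → ℕ,
    (∀ i : ℕ, C ↥(partSupport G g i) (partGraph G g i)) ∧ ((brittleVertices G g).ncard : ℕ∞) = n}

/-- The `C̄`-capacity of `G`: the maximum number of pairwise edge-disjoint subgraphs
of `G`, none of which belongs to `C`. -/
noncomputable def capacity (C : GraphClass) {V : Type} (G : SimpleGraph V) : ℕ∞ :=
  sSup {n : ℕ∞ | ∃ m : ℕ, (m : ℕ∞) = n ∧ ∃ H : Fin m → G.Subgraph,
    (∀ i j, i ≠ j → Disjoint (H i).edgeSet (H j).edgeSet) ∧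
    (∀ i, ¬ C ↥(H i).verts (H i).coe)}

/-- The graph obtained from `G` by subdividing the edge `uv` once, using a new vertex. -/
def subdivideEdge {V : Type} (G : SimpleGraph V) (u v : V) : SimpleGraph (V ⊕ Unit) :=
  SimpleGraph.fromRel fun x y =>
    (∃ a b : V, x = Sum.inl a ∧ y = Sum.inl b ∧ G.Adj a b ∧ s(a, b) ≠ s(u, v)) ∨
    (∃ a : V, x = Sum.inl a ∧ y = Sum.inr () ∧ (a = u ∨ a = v))

/-- A graph bundled with its vertex type. -/
def FGraph : Type 1 := Σ V : Type, SimpleGraph V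

/-- `IsSubdivision G H` means `H` is (isomorphic to) a subdivision of `G`. -/
inductive IsSubdivision : FGraph → FGraph → Prop
  | of_iso {V W : Type} (G : SimpleGraph V) (H : SimpleGraph W) :
      Nonempty (G ≃g H) → IsSubdivision ⟨V, G⟩ ⟨W, H⟩
  | step {V : Type} (G : SimpleGraph V) {u v : V} (h : G.Adj u v) (H : FGraph) :
      IsSubdivision ⟨V ⊕ Unit, subdivideEdge G u v⟩ H → IsSubdivision ⟨V, G⟩ H

/-- `H` is a topological minor of `G`: some subgraph of `G` is isomorphic to a
subdivision of `H`. -/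
def IsTopMinor {W V : Type} (H : SimpleGraph W) (G : SimpleGraph V) : Prop :=
  ∃ S : G.Subgraph, IsSubdivision ⟨W, H⟩ ⟨↥S.verts, S.coe⟩

/-- An ideal: a class of graphs closed under isomorphism and topological minors. -/
def IsIdeal (C : GraphClass) : Prop :=
  ClosedUnderIso C ∧
  ∀ {V W : Type} (G : SimpleGraph V) (H : SimpleGraph W), IsTopMinor H G → C V G → C W H

/-- The image of vertex `v` in the `i`-th copy of `G` inside `Fan(G,S,k)`. -/
noncomputable def fanMap {V : Type} (S : Set V) (k : ℕ) (i : Fin k) (v : V) :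
    ↥S ⊕ (↥(Sᶜ : Set V) × Fin k) :=
  if h : v ∈ S then Sum.inl ⟨v, h⟩ else Sum.inr (⟨v, h⟩, i)

/-- `Fan G S k`: the graph obtained from `k` vertex-disjoint copies of `G` by
identifying, for each `v ∈ S`, all copies of `v` (and the copies of each edge of `G[S]`). -/
noncomputable def Fan {V : Type} (G : SimpleGraph V) (S : Set V) (k : ℕ) :
    SimpleGraph (↥S ⊕ (↥(Sᶜ : Set V) × Fin k)) :=
  SimpleGraph.fromRel fun x y =>
    ∃ (i : Fin k) (a b : V), G.Adj a b ∧ x = fanMap S k i a ∧ y = fanMap S k i b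

/-- The triangle `K₃`. -/
def K3 : SimpleGraph (Fin 3) := ⊤

/-- The complete graph `K₄`. -/
def K4 : SimpleGraph (Fin 4) := ⊤

/-- The complete bipartite graph `K_{2,n}`. -/
def K2n (n : ℕ) : SimpleGraph (Fin 2 ⊕ Fin n) := completeBipartiteGraph (Fin 2) (Fin n)

/-- The complete bipartite graph `K_{2,3}`. -/
def K23 : SimpleGraph (Fin 2 ⊕ Fin 3) := completeBipartiteGraph (Fin 2) (Fin 3)

/-- The diamond `D = K₄ ∖ e`. -/
def Diamond : SimpleGraph (Fin 4) := (⊤ : SimpleGraph (Fin 4)).deleteEdges {s((0 : Fin 4), 1)}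

/-- `K⁺_{2,3}`: `K_{2,3}` together with an edge joining the two degree-3 vertices. -/
def K23plus : SimpleGraph (Fin 2 ⊕ Fin 3) :=
  K23 ⊔ SimpleGraph.fromEdgeSet {s(Sum.inl 0, Sum.inl 1)}

/-- `W⁺_k`: the cycle on `2k` vertices together with a hub adjacent to the `k`
vertices in even position (the wheel with all rim edges subdivided). -/
def Wplus (k : ℕ) : SimpleGraph (Option (ZMod (2 * k))) :=
  SimpleGraph.fromRel fun x y =>
    (∃ a : ZMod (2 * k), x = some a ∧ y = some (a + 1)) ∨
    (∃ a : ZMod (2 * k), x = none ∧ y = some a ∧ a.val % 2 = 0)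

/-- An `H`-snare: a pair `(J,S)` with `H` a topological minor of `J`, `S` independent
in `J`, and `J ∖ S` connected. -/
def IsSnare {W V : Type} (H : SimpleGraph W) (J : SimpleGraph V) (S : Set V) : Prop :=
  IsTopMinor H J ∧ (∀ a ∈ S, ∀ b ∈ S, ¬ J.Adj a b) ∧ (J.induce Sᶜ).Connected

/-- Suppressing the vertex `v` in `J`: delete `v`, joining its (at most two) neighbours;
for a degree 2 vertex `v` this is the contraction `J/v` of an edge incident with `v`. -/
def suppress {V : Type} (J : SimpleGraph V) (v : V) : SimpleGraph ↥({v}ᶜ : Set V) :=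
  SimpleGraph.fromRel fun x y => J.Adj ↑x ↑y ∨ (J.Adj ↑x v ∧ J.Adj v ↑y)

/-- An `H`-trap: a minimal `H`-snare. -/
def IsTrap {W V : Type} (H : SimpleGraph W) (J : SimpleGraph V) (S : Set V) : Prop :=
  IsSnare H J S ∧
  (∀ J' : J.Subgraph, J' ≠ ⊤ → ¬ IsSnare H J'.coe {x : ↥J'.verts | ↑x ∈ S}) ∧
  (∀ v : V, v ∉ S → (J.neighborSet v).ncard = 2 →
    ¬ IsSnare H (suppress J v) {x : ↥({v}ᶜ : Set V) | ↑x ∈ S})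

/-- `G` has a tree-decomposition of width at most `w`. -/
def HasTreewidthLE {V : Type} (G : SimpleGraph V) (w : ℕ) : Prop :=
  ∃ (ι : Type) (_ : Fintype ι) (T : SimpleGraph ι) (β : ι → Set V),
    T.IsTree ∧
    (∀ u v : V, G.Adj u v → ∃ t : ι, u ∈ β t ∧ v ∈ β t) ∧
    (∀ v : V, (T.induce {t | v ∈ β t}).Connected) ∧
    (∀ t : ι, (β t).ncard ≤ w + 1)

/-- A graph is 2-connected if it has more than 2 vertices and remains connected
after deleting any single vertex. -/
def TwoConnected {V : Type} (G : SimpleGraph V) : Prop :=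
  2 < Nat.card V ∧ ∀ v : V, (G.induce {x | x ≠ v}).Connected

/-- The class of forests. -/
def ForestClass : GraphClass := fun _ G => G.IsAcyclic

/-- Outerplanar graphs: the graphs with no topological minor isomorphic to `K₄`
or `K_{2,3}`. -/
def Outerplanar {V : Type} (G : SimpleGraph V) : Prop :=
  ¬ IsTopMinor K4 G ∧ ¬ IsTopMinor K23 G

/-- The class of outerplanar graphs. -/
def OuterplanarClass : GraphClass := fun _ G => Outerplanar G

/-- The graph of `σ(G,P)`: for the path (walk) `P = v₀v₁⋯v_m`, add new vertices
`u₀,…,u_{m-1}`, where `uᵢ` is adjacent exactly to `vᵢ` and `v_{i+1}`. -/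
def sigmaGraph {V : Type} (G : SimpleGraph V) {a b : V} (P : G.Walk a b) :
    SimpleGraph (V ⊕ Fin P.length) :=
  SimpleGraph.fromRel fun x y =>
    (∃ p q : V, x = Sum.inl p ∧ y = Sum.inl q ∧ G.Adj p q) ∨
    (∃ (p : V) (i : Fin P.length), x = Sum.inl p ∧ y = Sum.inr i ∧
      (p = P.getVert i ∨ p = P.getVert (i + 1)))

/-- The new path `P'` of `σ(G,P)` (from the `j`-th vertex of `P` on). -/
noncomputable def sigmaWalk {V : Type} (G : SimpleGraph V) {a b : V} (P : G.Walk a b)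
    (j : ℕ) (h : j ≤ P.length) :
    (sigmaGraph G P).Walk (Sum.inl (P.getVert j)) (Sum.inl b) :=
  if hj : j = P.length then
    SimpleGraph.Walk.nil.copy (by rw [hj, SimpleGraph.Walk.getVert_length]) rfl
  else by
    have hlt : j < P.length := lt_of_le_of_ne h hj
    have adj1 : (sigmaGraph G P).Adj (Sum.inl (P.getVert j)) (Sum.inr ⟨j, hlt⟩) :=
      ⟨by simp, Or.inl (Or.inr ⟨P.getVert j, ⟨j, hlt⟩, rfl, rfl, Or.inl rfl⟩)⟩
    have adj2 : (sigmaGraph G P).Adj (Sum.inr ⟨j, hlt⟩) (Sum.inl (P.getVert (j + 1))) :=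
      ⟨by simp, Or.inr (Or.inr ⟨P.getVert (j + 1), ⟨j, hlt⟩, rfl, rfl, Or.inr rfl⟩)⟩
    exact SimpleGraph.Walk.cons adj1 (SimpleGraph.Walk.cons adj2 (sigmaWalk G P (j + 1) hlt))
  termination_by P.length - j
  decreasing_by omega

/-- A hemmed graph: a graph together with a walk in it. -/
structure HGraph where
  V : Type
  G : SimpleGraph V
  a : V
  b : V
  P : G.Walk a b

/-- The operation `σ` on hemmed graphs. -/
noncomputable def HGraph.step (X : HGraph) : HGraph :=
  ⟨X.V ⊕ Fin X.P.length, sigmaGraph X.G X.P, Sum.inl X.a, Sum.inl X.b,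
    (sigmaWalk X.G X.P 0 (Nat.zero_le _)).copy
      (by rw [SimpleGraph.Walk.getVert_zero]) rfl⟩

/-- Adding to `G` a new (apex) vertex adjacent exactly to the vertices in `X`. -/
def AddApex {V : Type} (G : SimpleGraph V) (X : Set V) : SimpleGraph (V ⊕ Unit) :=
  SimpleGraph.fromRel fun x y =>
    (∃ p q : V, x = Sum.inl p ∧ y = Sum.inl q ∧ G.Adj p q) ∨
    (∃ p : V, x = Sum.inl p ∧ y = Sum.inr () ∧ p ∈ X)

/-- A hemmed graph `(G,P)` is outerplanar: `G` has an outerplanar drawing with `P`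
on the boundary of the outer face; equivalently, the graph obtained by adding a new
vertex adjacent to all vertices of `P` is outerplanar. -/
def HemmedOuterplanar {V : Type} (G : SimpleGraph V) {a b : V} (P : G.Walk a b) : Prop :=
  Outerplanar (AddApex G {v | v ∈ P.support})

theorem Sym2.ncard_coe_le_two {α : Type*} (e : Sym2 α) : (e : Set α).ncard ≤ 2 := by
  have : (e : Set α) = e.toFinset := by ext; simp [Sym2.mem_toFinset]
  rw [this, Set.ncard_coe_finset, Sym2.card_toFinset]
  split_ifs <;> omega

theorem Set.ncard_biUnion_sym2_le {α : Type*} [Finite α] (F : Set (Sym2 α)) :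
    (⋃ e ∈ F, (e : Set α)).ncard ≤ 2 * F.ncard := by
  have hF := F.toFinite
  calc (⋃ e ∈ F, (e : Set α)).ncard = (⋃ e ∈ hF.toFinset, (e : Set α)).ncard := by simp
    _ ≤ ∑ e ∈ hF.toFinset, (e : Set α).ncard := hF.toFinset.set_ncard_biUnion_le _
    _ ≤ hF.toFinset.card • 2 := Finset.sum_le_card_nsmul _ _ _ fun e _ => e.ncard_coe_le_two
    _ = 2 * F.ncard := by rw [Set.ncard_eq_toFinset_card F hF, smul_eq_mul, mul_comm]

section ClosureProperties

variable {C : GraphClass}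

theorem ClosedUnderSubgraphs.mem_of_isEmpty (hiso : ClosedUnderIso C)
    (hsub : ClosedUnderSubgraphs C) {V₀ : Type} {G₀ : SimpleGraph V₀} (hG₀ : C V₀ G₀)
    {W : Type} [IsEmpty W] (H : SimpleGraph W) : C W H := by
  have : IsEmpty (⊥ : G₀.Subgraph).verts := by simp
  exact hiso _ H ⟨⟨Equiv.equivOfIsEmpty _ _, fun {a} => isEmptyElim a⟩⟩
    (hsub G₀ ⊥ hG₀)

theorem ClosedUnderIso.top_mem_of_card_eq_two (hiso : ClosedUnderIso C) (hK2 : C (Fin 2) ⊤)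
    {W : Type} (hW : Nat.card W = 2) : C W ⊤ :=
  have : Finite W := Nat.finite_of_card_ne_zero (by omega)
  hiso _ _ ⟨Iso.completeGraph (Finite.equivFinOfCardEq hW).symm⟩ hK2

theorem ClosedUnderSubgraphs.induce (hsub : ClosedUnderSubgraphs C) {V : Type}
    {G : SimpleGraph V} (hG : C V G) (s : Set V) : C s (G.induce s) := by
  rw [induce_eq_coe_induce_top]
  exact hsub G ((⊤ : G.Subgraph).induce s) hG

end ClosureProperties

section Parts

variable {V : Type} {G : SimpleGraph V} {g : Sym2 V → ℕ} {i : ℕ}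

theorem partGraph_eq_induce {H : SimpleGraph V}
    (hH : {e | e ∈ G.edgeSet ∧ g e = i} = H.edgeSet) :
    partGraph G g i = H.induce (partSupport G g i) := by
  rw [partGraph, hH, fromEdgeSet_edgeSet]

theorem isEmpty_partSupport (h : ∀ e ∈ G.edgeSet, g e ≠ i) : IsEmpty (partSupport G g i) :=
  Set.isEmpty_coe_sort.2 <| Set.eq_empty_iff_forall_notMem.2 fun _ ⟨e, he, hei, _⟩ => h e he hei

variable {a b : V}

theorem partSupport_eq_pair (h : ∀ e ∈ G.edgeSet, g e = i ↔ e = s(a, b)) (hab : G.Adj a b) :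
    partSupport G g i = {a, b} := by
  ext v
  constructor
  · rintro ⟨e, he, hei, hv⟩
    rw [(h e he).1 hei] at hv
    simpa using hv
  · have hi := (h _ hab).2 rfl
    rintro (rfl | rfl)
    · exact ⟨_, hab, hi, Sym2.mem_mk_left _ _⟩
    · exact ⟨_, hab, hi, Sym2.mem_mk_right _ _⟩

theorem partGraph_eq_top (h : ∀ e ∈ G.edgeSet, g e = i ↔ e = s(a, b)) (hab : G.Adj a b) :
    partGraph G g i = ⊤ := by
  ext ⟨u, hu⟩ ⟨v, hv⟩
  rw [partSupport_eq_pair h hab] at hu hv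
  simp only [partGraph, comap_adj, Function.Embedding.coe_subtype, fromEdgeSet_adj,
    Set.mem_ofPred_eq, top_adj, ne_eq, Subtype.mk.injEq]
  constructor
  · exact fun h => h.2
  · intro huv
    have hab' : s(u, v) = s(a, b) := by
      rcases hu with rfl | rfl <;> rcases hv with rfl | rfl <;> simp_all [Sym2.eq_swap]
    exact ⟨⟨hab' ▸ hab, (h _ (hab' ▸ hab)).2 hab'⟩, huv⟩

end Parts

section IsolatingLabelling

variable {V : Type} (F : Set (Sym2 V)) (enc : Sym2 V → ℕ)

noncomputable def isolatingLabelling (e : Sym2 V) : ℕ :=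
  if e ∈ F then enc e + 1 else 0

variable {F enc}

theorem isolatingLabelling_eq_zero_iff {e : Sym2 V} :
    isolatingLabelling F enc e = 0 ↔ e ∉ F := by
  by_cases he : e ∈ F <;> simp [isolatingLabelling, he]

theorem isolatingLabelling_eq_iff (henc : Function.Injective enc) {e e' : Sym2 V} (he : e ∈ F) :
    isolatingLabelling F enc e' = isolatingLabelling F enc e ↔ e' = e := by
  refine ⟨fun h => ?_, fun h => h ▸ rfl⟩
  by_cases he' : e' ∈ F
  · simpa [isolatingLabelling, he, he', henc.eq_iff] using h
  · simp [isolatingLabelling, he, he'] at h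

theorem brittleVertices_isolatingLabelling_subset (G : SimpleGraph V) :
    brittleVertices G (isolatingLabelling F enc) ⊆ ⋃ e ∈ F, (e : Set V) := by
  rintro v ⟨e₁, e₂, -, -, hv₁, hv₂, hne⟩
  simp only [Set.mem_iUnion]
  by_contra! hv
  exact hne <| (isolatingLabelling_eq_zero_iff.2 fun h => hv e₁ h hv₁).trans
    (isolatingLabelling_eq_zero_iff.2 fun h => hv e₂ h hv₂).symm

variable {C : GraphClass} {G : SimpleGraph V}

theorem partGraph_isolatingLabelling_mem (hiso : ClosedUnderIso C)
    (hsub : ClosedUnderSubgraphs C) (hK2 : C (Fin 2) ⊤) (henc : Function.Injective enc)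
    (hF : C V (G.deleteEdges F)) (i : ℕ) :
    C (partSupport G (isolatingLabelling F enc) i) (partGraph G (isolatingLabelling F enc) i) := by
  rcases eq_or_ne i 0 with rfl | hi
  · have hzero : {e | e ∈ G.edgeSet ∧ isolatingLabelling F enc e = 0} =
        (G.deleteEdges F).edgeSet := by
      ext e
      simp [isolatingLabelling_eq_zero_iff]
    rw [partGraph_eq_induce hzero]
    exact hsub.induce hF _
  by_cases hpart : ∃ e ∈ G.edgeSet, isolatingLabelling F enc e = i
  · obtain ⟨e, he, rfl⟩ := hpart
    have heF : e ∈ F := by simpa [isolatingLabelling_eq_zero_iff] using hi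
    induction e using Sym2.ind with | _ a b =>
    have hsingle : ∀ e' ∈ G.edgeSet,
        isolatingLabelling F enc e' = isolatingLabelling F enc s(a, b) ↔ e' = s(a, b) :=
      fun _ _ => isolatingLabelling_eq_iff henc heF
    rw [partGraph_eq_top hsingle he]
    refine hiso.top_mem_of_card_eq_two hK2 ?_
    rw [Nat.card_coe_set_eq, partSupport_eq_pair hsingle he, Set.ncard_pair (G.ne_of_adj he)]
  · push Not at hpart
    have := isEmpty_partSupport hpart
    exact hsub.mem_of_isEmpty hiso hF _

end IsolatingLabelling

theorem exists_deleteEdges_mem_of_editDist_ne_top {C : GraphClass} {V : Type}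
    {G : SimpleGraph V} (h : editDist C G ≠ ⊤) :
    ∃ F ⊆ G.edgeSet, C V (G.deleteEdges F) ∧ (F.ncard : ℕ∞) = editDist C G := by
  have hne :
      {n : ℕ∞ | ∃ F ⊆ G.edgeSet, C V (G.deleteEdges F) ∧ (F.ncard : ℕ∞) = n}.Nonempty :=
    Set.nonempty_iff_ne_empty.2 fun he => h (by rw [editDist, he, sInf_empty])
  exact csInf_mem hne

theorem vertexBrittleness_le_two_mul_editDist_general (C : GraphClass)
    (hiso : ClosedUnderIso C) (hsub : ClosedUnderSubgraphs C)
    (hK2 : C (Fin 2) ⊤)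
    (V : Type) [Fintype V] (G : SimpleGraph V) :
    vertexBrittleness C G ≤ 2 * editDist C G := by
  by_cases htop : editDist C G = ⊤
  · simp [htop]
  obtain ⟨F, -, hF, hFcard⟩ := exists_deleteEdges_mem_of_editDist_ne_top htop
  obtain ⟨enc, henc⟩ := exists_injective_nat (Sym2 V)
  have hbrittle : (brittleVertices G (isolatingLabelling F enc)).ncard ≤ 2 * F.ncard :=
    (Set.ncard_le_ncard (brittleVertices_isolatingLabelling_subset G)).trans
      (Set.ncard_biUnion_sym2_le F)
  calc vertexBrittleness C G ≤ (brittleVertices G (isolatingLabelling F enc)).ncard :=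
        sInf_le ⟨_, partGraph_isolatingLabelling_mem hiso hsub hK2 henc hF, rfl⟩
    _ ≤ (2 * F.ncard : ℕ) := by exact_mod_cast hbrittle
    _ = 2 * editDist C G := by rw [Nat.cast_mul, hFcard]; rfl

/-- For a monotone class `C` as above, `κ_C(G) ≤ 2 · e_C(G)`. -/
theorem vertexBrittleness_le_two_mul_editDist (C : GraphClass)
    (hiso : ClosedUnderIso C) (hsub : ClosedUnderSubgraphs C)
    (hK1 : C (Fin 1) ⊤) (hK2 : C (Fin 2) ⊤) (hdu : ClosedUnderDisjointUnion C)
    (V : Type) [Fintype V] (G : SimpleGraph V) :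
    vertexBrittleness C G ≤ 2 * editDist C G :=
  vertexBrittleness_le_two_mul_editDist_general C hiso hsub hK2 V G
end

section
/- Let 𝒞 be an ideal (closed under isomorphism and topological minors). If G' is a topological minor of a graph G, then the 𝒞-vertex-brittleness satisfies κ_𝒞(G') ≤ κ_𝒞(G). -/
open Classical SimpleGraph

/-!
An admissible edge labelling of `G` is turned into one of `G'` with no more brittle vertices,
each part of the new labelling being a topological minor of a part of the old one. For a copy
of `G'` in `G` the labelling is pulled back. If `G` arises from `G'` by subdividing `uv` with a
vertex `x`, and `ux`, `xv` carry labels `i`, `j`, then `uv` gets label `i` when `i = j`.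
Otherwise `x` is brittle. If `u` is brittle as well, `uv` gets a fresh label (its part, a single
edge, is a topological minor of the `i`-part) and `v` is charged to `x`; if not, every edge at
`u` has label `i ≠ j`, so `uv` can take label `j`, with `u` charged to `x`.
-/

open Function

variable {V₁ V₂ : Type}

theorem SimpleGraph.IsContained.isTopMinor {G₁ : SimpleGraph V₁} {G₂ : SimpleGraph V₂}
    (h : G₁ ⊑ G₂) : IsTopMinor G₁ G₂ := by
  obtain ⟨S, ⟨e⟩⟩ := h.exists_iso_subgraph
  exact ⟨S, .of_iso _ _ ⟨e⟩⟩

theorem IsTopMinor.of_subdivideEdge {H : SimpleGraph V₁} {K : SimpleGraph V₂} {u v : V₁}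
    (huv : H.Adj u v) (h : IsTopMinor (subdivideEdge H u v) K) : IsTopMinor H K := by
  obtain ⟨S, hS⟩ := h
  exact ⟨S, .step H huv _ hS⟩

theorem subdivideEdge_isContained {H : SimpleGraph V₁} {K : SimpleGraph V₂} {u v : V₁}
    (φ : V₁ → V₂) (hφ : Injective φ) (y : V₂) (hy : ∀ a, φ a ≠ y)
    (hadj : ∀ a b, H.Adj a b → s(a, b) ≠ s(u, v) → K.Adj (φ a) (φ b))
    (hu : K.Adj (φ u) y) (hv : K.Adj (φ v) y) : subdivideEdge H u v ⊑ K := by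
  refine ⟨⟨⟨Sum.elim φ fun _ => y, ?_⟩,
    hφ.sumElim (fun a b _ => Subsingleton.elim a b) fun a _ => hy a⟩⟩
  rintro _ _ ⟨-, (⟨a, b, rfl, rfl, hab, hne⟩ | ⟨a, rfl, rfl, rfl | rfl⟩) |
    (⟨a, b, rfl, rfl, hab, hne⟩ | ⟨a, rfl, rfl, rfl | rfl⟩)⟩
  exacts [hadj a b hab hne, hu, hv, (hadj a b hab hne).symm, hu.symm, hv.symm]

theorem mem_partSupport_iff {G : SimpleGraph V₁} {g : Sym2 V₁ → ℕ} {i : ℕ} {w : V₁} :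
    w ∈ partSupport G g i ↔ ∃ b, G.Adj w b ∧ g s(w, b) = i := by
  constructor
  · rintro ⟨e, he, hi, hw⟩
    obtain ⟨b, rfl⟩ := Sym2.mem_iff_exists.1 hw
    exact ⟨b, he, hi⟩
  · rintro ⟨b, hwb, hi⟩
    exact ⟨s(w, b), hwb, hi, Sym2.mem_mk_left w b⟩

theorem partGraph_adj {G : SimpleGraph V₁} {g : Sym2 V₁ → ℕ} {i : ℕ}
    {a b : partSupport G g i} : (partGraph G g i).Adj a b ↔ G.Adj a b ∧ g s(a, b) = i := by
  simp only [partGraph, comap_adj, Embedding.coe_subtype, fromEdgeSet_adj, Set.mem_ofPred_eq,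
    mem_edgeSet, and_iff_left_iff_imp, and_imp]
  exact fun hab _ => hab.ne

theorem partGraph_isContained {G₁ : SimpleGraph V₁} {G₂ : SimpleGraph V₂}
    {g₁ : Sym2 V₁ → ℕ} {g₂ : Sym2 V₂ → ℕ} {ℓ m : ℕ} (φ : V₁ → V₂) (hφ : Injective φ)
    (h : ∀ a b, G₁.Adj a b → g₁ s(a, b) = ℓ → G₂.Adj (φ a) (φ b) ∧ g₂ s(φ a, φ b) = m) :
    partGraph G₁ g₁ ℓ ⊑ partGraph G₂ g₂ m := by
  have hmem : ∀ w ∈ partSupport G₁ g₁ ℓ, φ w ∈ partSupport G₂ g₂ m := by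
    simp only [mem_partSupport_iff]
    rintro w ⟨b, hwb, hℓ⟩
    exact ⟨φ b, h w b hwb hℓ⟩
  refine ⟨⟨⟨fun w => ⟨φ w, hmem w w.2⟩, fun hab => ?_⟩,
    fun a b hab => Subtype.ext (hφ (congrArg Subtype.val hab))⟩⟩
  rw [partGraph_adj] at hab ⊢
  exact h _ _ hab.1 hab.2

theorem partGraph_isTopMinor_of_subdivide {G₁ : SimpleGraph V₁} {G₂ : SimpleGraph V₂}
    {g₁ : Sym2 V₁ → ℕ} {g₂ : Sym2 V₂ → ℕ} {ℓ m : ℕ} (φ : V₁ → V₂) (hφ : Injective φ)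
    (y : V₂) (hy : ∀ a, φ a ≠ y) {u v : V₁} (huv : G₁.Adj u v) (hℓ : g₁ s(u, v) = ℓ)
    (h : ∀ a b, G₁.Adj a b → g₁ s(a, b) = ℓ → s(a, b) ≠ s(u, v) →
      G₂.Adj (φ a) (φ b) ∧ g₂ s(φ a, φ b) = m)
    (hu : G₂.Adj (φ u) y ∧ g₂ s(φ u, y) = m) (hv : G₂.Adj (φ v) y ∧ g₂ s(φ v, y) = m) :
    IsTopMinor (partGraph G₁ g₁ ℓ) (partGraph G₂ g₂ m) := by
  have hmem : ∀ w ∈ partSupport G₁ g₁ ℓ, φ w ∈ partSupport G₂ g₂ m := by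
    simp only [mem_partSupport_iff]
    rintro w ⟨b, hwb, hwbℓ⟩
    by_cases hne : s(w, b) = s(u, v)
    · rcases Sym2.eq_iff.1 hne with ⟨rfl, -⟩ | ⟨rfl, -⟩
      exacts [⟨y, hu⟩, ⟨y, hv⟩]
    · exact ⟨φ b, h w b hwb hwbℓ hne⟩
  have hymem : y ∈ partSupport G₂ g₂ m :=
    mem_partSupport_iff.2 ⟨φ u, hu.1.symm, by rw [Sym2.eq_swap]; exact hu.2⟩
  let u' : partSupport G₁ g₁ ℓ := ⟨u, mem_partSupport_iff.2 ⟨v, huv, hℓ⟩⟩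
  let v' : partSupport G₁ g₁ ℓ := ⟨v, mem_partSupport_iff.2 ⟨u, huv.symm, by rwa [Sym2.eq_swap]⟩⟩
  refine IsTopMinor.of_subdivideEdge (u := u') (v := v') (partGraph_adj.2 ⟨huv, hℓ⟩)
    (subdivideEdge_isContained (fun w => ⟨φ w, hmem w w.2⟩)
      (fun a b hab => Subtype.ext (hφ (congrArg Subtype.val hab))) ⟨y, hymem⟩
      (fun a hay => hy a (congrArg Subtype.val hay)) (fun a b hab hne => ?_)
      (partGraph_adj.2 hu) (partGraph_adj.2 hv)).isTopMinor
  rw [partGraph_adj] at hab ⊢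
  refine h _ _ hab.1 hab.2 fun hab' => hne (Sym2.map.injective Subtype.val_injective ?_)
  simpa using hab'

theorem mem_brittleVertices_of_labels {G₁ : SimpleGraph V₁} {G₂ : SimpleGraph V₂}
    {g₁ : Sym2 V₁ → ℕ} {g₂ : Sym2 V₂ → ℕ} {w : V₁} {w' : V₂}
    (hw : w ∈ brittleVertices G₁ g₁)
    (h : ∀ e ∈ G₁.edgeSet, w ∈ e → ∃ e' ∈ G₂.edgeSet, w' ∈ e' ∧ g₂ e' = g₁ e) :
    w' ∈ brittleVertices G₂ g₂ := by
  obtain ⟨e₁, e₂, he₁, he₂, hw₁, hw₂, hne⟩ := hw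
  obtain ⟨e₁', he₁', hw₁', hl₁⟩ := h e₁ he₁ hw₁
  obtain ⟨e₂', he₂', hw₂', hl₂⟩ := h e₂ he₂ hw₂
  exact ⟨e₁', e₂', he₁', he₂', hw₁', hw₂', by rwa [hl₁, hl₂]⟩

def Admissible (C : GraphClass) (G : SimpleGraph V₁) (g : Sym2 V₁ → ℕ) : Prop :=
  ∀ i, C (partSupport G g i) (partGraph G g i)

theorem vertexBrittleness_le_of_forall_exists (C : GraphClass) {G₁ : SimpleGraph V₁}
    {G₂ : SimpleGraph V₂}
    (h : ∀ g₂, Admissible C G₂ g₂ → ∃ g₁, Admissible C G₁ g₁ ∧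
      (brittleVertices G₁ g₁).ncard ≤ (brittleVertices G₂ g₂).ncard) :
    vertexBrittleness C G₁ ≤ vertexBrittleness C G₂ := by
  refine le_sInf ?_
  rintro _ ⟨g₂, hg₂, rfl⟩
  obtain ⟨g₁, hg₁, hle⟩ := h g₂ hg₂
  calc vertexBrittleness C G₁ ≤ (brittleVertices G₁ g₁).ncard := sInf_le ⟨g₁, hg₁, rfl⟩
    _ ≤ _ := by exact_mod_cast hle

theorem vertexBrittleness_le_of_copy {C : GraphClass} (hC : IsIdeal C) [Finite V₂]
    {G₁ : SimpleGraph V₁} {G₂ : SimpleGraph V₂} (f : Copy G₁ G₂) :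
    vertexBrittleness C G₁ ≤ vertexBrittleness C G₂ := by
  refine vertexBrittleness_le_of_forall_exists C fun g hg =>
    ⟨fun e => g (e.map f), fun i => hC.2 _ _ ?_ (hg i), ?_⟩
  · exact (partGraph_isContained f f.injective fun a b hab hi =>
      ⟨f.toHom.map_adj hab, hi⟩).isTopMinor
  · refine Set.ncard_le_ncard_of_injOn f (fun w hw => mem_brittleVertices_of_labels hw
      fun e he hwe => ⟨e.map f, f.toHom.map_mem_edgeSet he, Sym2.mem_map.2 ⟨w, hwe, rfl⟩, rfl⟩)
      f.injective.injOn (Set.toFinite _)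

section Subdivision

variable {C : GraphClass} {V : Type} {G : SimpleGraph V} {u v : V} {g : Sym2 (V ⊕ Unit) → ℕ}

theorem subdivideEdge_comm (G : SimpleGraph V) (u v : V) :
    subdivideEdge G u v = subdivideEdge G v u := by
  simp only [subdivideEdge, Sym2.eq_swap (a := u), or_comm (a := _ = u)]

theorem subdivideEdge_adj_inl {a b : V} (hab : G.Adj a b) (hne : s(a, b) ≠ s(u, v)) :
    (subdivideEdge G u v).Adj (Sum.inl a) (Sum.inl b) :=
  ⟨by simpa using hab.ne, .inl (.inl ⟨a, b, rfl, rfl, hab, hne⟩)⟩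

theorem subdivideEdge_adj_left : (subdivideEdge G u v).Adj (Sum.inl u) (Sum.inr ()) :=
  ⟨by simp, .inl (.inr ⟨u, rfl, rfl, .inl rfl⟩)⟩

theorem subdivideEdge_adj_right : (subdivideEdge G u v).Adj (Sum.inl v) (Sum.inr ()) :=
  ⟨by simp, .inl (.inr ⟨v, rfl, rfl, .inr rfl⟩)⟩

theorem map_inl_mem_edgeSet_subdivideEdge {e : Sym2 V} (he : e ∈ G.edgeSet)
    (hne : e ≠ s(u, v)) : e.map Sum.inl ∈ (subdivideEdge G u v).edgeSet := by
  induction e using Sym2.ind with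
  | _ a b => exact subdivideEdge_adj_inl he hne

noncomputable def smoothLabel (u v : V) (g : Sym2 (V ⊕ Unit) → ℕ) (c : ℕ) : Sym2 V → ℕ :=
  update (fun e => g (e.map Sum.inl)) s(u, v) c

theorem smoothLabel_self {c : ℕ} : smoothLabel u v g c s(u, v) = c :=
  update_self ..

theorem smoothLabel_of_ne {c : ℕ} {e : Sym2 V} (he : e ≠ s(u, v)) :
    smoothLabel u v g c e = g (e.map Sum.inl) :=
  update_of_ne he ..

theorem smoothLabel_comm (u v : V) : smoothLabel u v = smoothLabel (V := V) v u := by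
  unfold smoothLabel
  rw [Sym2.eq_swap]

theorem partGraph_smoothLabel_isContained_of_ne {c ℓ : ℕ} (hℓ : ℓ ≠ c) :
    partGraph G (smoothLabel u v g c) ℓ ⊑ partGraph (subdivideEdge G u v) g ℓ :=
  partGraph_isContained Sum.inl Sum.inl_injective fun a b hab hl => by
    have hne : s(a, b) ≠ s(u, v) := by
      rintro h
      rw [h, smoothLabel_self] at hl
      exact hℓ hl.symm
    rw [smoothLabel_of_ne hne] at hl
    exact ⟨subdivideEdge_adj_inl hab hne, hl⟩

theorem Admissible.smoothLabel (hC : IsIdeal C) (hg : Admissible C (subdivideEdge G u v) g)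
    {c m : ℕ}
    (hc : IsTopMinor (partGraph G (smoothLabel u v g c) c) (partGraph (subdivideEdge G u v) g m)) :
    Admissible C G (smoothLabel u v g c) := by
  intro ℓ
  rcases eq_or_ne ℓ c with rfl | hℓ
  · exact hC.2 _ _ hc (hg m)
  · exact hC.2 _ _ (partGraph_smoothLabel_isContained_of_ne hℓ).isTopMinor (hg ℓ)

theorem inl_mem_brittleVertices_of_smoothLabel {c : ℕ} {w : V}
    (hw : w ∈ brittleVertices G (smoothLabel u v g c))
    (hc : w ∈ s(u, v) → ∃ e ∈ (subdivideEdge G u v).edgeSet, Sum.inl w ∈ e ∧ g e = c) :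
    Sum.inl w ∈ brittleVertices (subdivideEdge G u v) g := by
  refine mem_brittleVertices_of_labels hw fun e he hwe => ?_
  by_cases huv : e = s(u, v)
  · subst huv
    rw [smoothLabel_self]
    exact hc hwe
  · rw [smoothLabel_of_ne huv]
    exact ⟨e.map Sum.inl, map_inl_mem_edgeSet_subdivideEdge he huv,
      Sym2.mem_map.2 ⟨w, hwe, rfl⟩, rfl⟩

theorem injective_update_inl (v : V) :
    Injective (update (Sum.inl : V → V ⊕ Unit) v (Sum.inr ())) := by
  intro a b hab
  by_cases ha : a = v <;> by_cases hb : b = v <;> simp_all [update_of_ne]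

theorem partGraph_smoothLabel_isTopMinor_of_eq (huv : G.Adj u v)
    (hij : g s(Sum.inl u, Sum.inr ()) = g s(Sum.inl v, Sum.inr ())) :
    IsTopMinor
      (partGraph G (smoothLabel u v g (g s(Sum.inl u, Sum.inr ()))) (g s(Sum.inl u, Sum.inr ())))
      (partGraph (subdivideEdge G u v) g (g s(Sum.inl u, Sum.inr ()))) := by
  refine partGraph_isTopMinor_of_subdivide Sum.inl Sum.inl_injective (Sum.inr ())
    (fun _ => Sum.inl_ne_inr) huv smoothLabel_self (fun a b hab hl hne => ?_)
    ⟨subdivideEdge_adj_left, rfl⟩ ⟨subdivideEdge_adj_right, hij.symm⟩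
  rw [smoothLabel_of_ne hne] at hl
  exact ⟨subdivideEdge_adj_inl hab hne, hl⟩

theorem ncard_brittleVertices_smoothLabel_le_of_eq [Finite V]
    (hij : g s(Sum.inl u, Sum.inr ()) = g s(Sum.inl v, Sum.inr ())) :
    (brittleVertices G (smoothLabel u v g (g s(Sum.inl u, Sum.inr ())))).ncard ≤
      (brittleVertices (subdivideEdge G u v) g).ncard := by
  refine Set.ncard_le_ncard_of_injOn Sum.inl (fun w hw =>
    inl_mem_brittleVertices_of_smoothLabel hw fun hwuv => ?_)
    Sum.inl_injective.injOn (Set.toFinite _)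
  rcases Sym2.mem_iff.1 hwuv with rfl | rfl
  · exact ⟨s(Sum.inl w, Sum.inr ()), subdivideEdge_adj_left, Sym2.mem_mk_left _ _, rfl⟩
  · exact ⟨s(Sum.inl w, Sum.inr ()), subdivideEdge_adj_right, Sym2.mem_mk_left _ _, hij.symm⟩

theorem partGraph_smoothLabel_isContained (huv : G.Adj u v) {c : ℕ}
    (hc : ∀ e ∈ G.edgeSet, e ≠ s(u, v) → g (e.map Sum.inl) = c →
      v ∉ e ∧ c = g s(Sum.inl u, Sum.inr ())) :
    partGraph G (smoothLabel u v g c) c ⊑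
      partGraph (subdivideEdge G u v) g (g s(Sum.inl u, Sum.inr ())) := by
  refine partGraph_isContained _ (injective_update_inl v) fun a b hab hl => ?_
  by_cases hne : s(a, b) = s(u, v)
  · rcases Sym2.eq_iff.1 hne with ⟨rfl, rfl⟩ | ⟨rfl, rfl⟩
    · rw [update_of_ne huv.ne, update_self]
      exact ⟨subdivideEdge_adj_left, rfl⟩
    · rw [update_of_ne huv.ne, update_self, Sym2.eq_swap]
      exact ⟨subdivideEdge_adj_left.symm, rfl⟩
  · rw [smoothLabel_of_ne hne] at hl
    obtain ⟨hve, rfl⟩ := hc _ hab hne hl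
    have ha : a ≠ v := fun h => hve (h ▸ Sym2.mem_mk_left _ _)
    have hb : b ≠ v := fun h => hve (h ▸ Sym2.mem_mk_right _ _)
    rw [update_of_ne ha, update_of_ne hb]
    exact ⟨subdivideEdge_adj_inl hab hne, hl⟩

theorem ncard_brittleVertices_smoothLabel_le_of_ne [Finite V]
    (hij : g s(Sum.inl u, Sum.inr ()) ≠ g s(Sum.inl v, Sum.inr ())) {c : ℕ}
    (hu : c = g s(Sum.inl u, Sum.inr ()) ∨
      Sum.inl u ∈ brittleVertices (subdivideEdge G u v) g) :
    (brittleVertices G (smoothLabel u v g c)).ncard ≤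
      (brittleVertices (subdivideEdge G u v) g).ncard := by
  refine Set.ncard_le_ncard_of_injOn _ (fun w hw => ?_) (injective_update_inl v).injOn
    (Set.toFinite _)
  by_cases hwv : w = v
  · rw [hwv, update_self]
    exact ⟨_, _, subdivideEdge_adj_left, subdivideEdge_adj_right, Sym2.mem_mk_right _ _,
      Sym2.mem_mk_right _ _, hij⟩
  rw [update_of_ne hwv]
  by_cases hwu : w = u
  · subst hwu
    rcases hu with rfl | hu
    · exact inl_mem_brittleVertices_of_smoothLabel hw fun _ =>
        ⟨s(Sum.inl w, Sum.inr ()), subdivideEdge_adj_left, Sym2.mem_mk_left _ _, rfl⟩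
    · exact hu
  · exact inl_mem_brittleVertices_of_smoothLabel hw fun hwuv =>
      ((Sym2.mem_iff.1 hwuv).elim hwu hwv).elim

theorem exists_smoothLabel_admissible_ncard_le [Finite V] (hC : IsIdeal C) (huv : G.Adj u v)
    (hg : Admissible C (subdivideEdge G u v) g) :
    ∃ c, Admissible C G (smoothLabel u v g c) ∧
      (brittleVertices G (smoothLabel u v g c)).ncard ≤
        (brittleVertices (subdivideEdge G u v) g).ncard := by
  by_cases hij : g s(Sum.inl u, Sum.inr ()) = g s(Sum.inl v, Sum.inr ())
  · exact ⟨_, hg.smoothLabel hC (partGraph_smoothLabel_isTopMinor_of_eq huv hij),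
      ncard_brittleVertices_smoothLabel_le_of_eq hij⟩
  by_cases hu : Sum.inl u ∈ brittleVertices (subdivideEdge G u v) g
  · obtain ⟨k, hk⟩ := (G.edgeSet.toFinite.image fun e => g (e.map Sum.inl)).exists_notMem
    exact ⟨k, hg.smoothLabel hC (partGraph_smoothLabel_isContained huv
        fun e he _ hl => absurd ⟨e, he, hl⟩ hk).isTopMinor,
      ncard_brittleVertices_smoothLabel_le_of_ne hij (.inr hu)⟩
  have hu' : ∀ e ∈ G.edgeSet, e ≠ s(v, u) →
      g (e.map Sum.inl) = g s(Sum.inl v, Sum.inr ()) → u ∉ e := fun e he hne hl hue =>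
    hu ⟨s(Sum.inl u, Sum.inr ()), e.map Sum.inl, subdivideEdge_adj_left,
      map_inl_mem_edgeSet_subdivideEdge he (by rwa [Sym2.eq_swap]), Sym2.mem_mk_left _ _,
      Sym2.mem_map.2 ⟨u, hue, rfl⟩, by rw [hl]; exact hij⟩
  rw [subdivideEdge_comm] at hg ⊢
  rw [smoothLabel_comm]
  exact ⟨_, hg.smoothLabel hC (partGraph_smoothLabel_isContained huv.symm
      fun e he hne hl => ⟨hu' e he hne hl, rfl⟩).isTopMinor,
    ncard_brittleVertices_smoothLabel_le_of_ne (Ne.symm hij) (.inl rfl)⟩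

theorem vertexBrittleness_le_subdivideEdge [Finite V] (hC : IsIdeal C) (huv : G.Adj u v) :
    vertexBrittleness C G ≤ vertexBrittleness C (subdivideEdge G u v) :=
  vertexBrittleness_le_of_forall_exists C fun _ hg =>
    let ⟨_, hc⟩ := exists_smoothLabel_admissible_ncard_le hC huv hg
    ⟨_, hc⟩

end Subdivision

theorem IsSubdivision.finite {A B : FGraph} (h : IsSubdivision A B) (hB : Finite B.1) :
    Finite A.1 := by
  induction h with
  | of_iso G H e => exact .of_equiv _ e.some.toEquiv.symm
  | step G huv B hsub ih =>
    have := ih hB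
    exact .of_injective (β := _ ⊕ Unit) Sum.inl Sum.inl_injective

theorem IsSubdivision.vertexBrittleness_le {C : GraphClass} (hC : IsIdeal C) {A B : FGraph}
    (h : IsSubdivision A B) (hB : Finite B.1) :
    vertexBrittleness C A.2 ≤ vertexBrittleness C B.2 := by
  induction h with
  | of_iso G H e => exact vertexBrittleness_le_of_copy hC e.some.toCopy
  | step G huv B hsub ih =>
    have : Finite _ := (IsSubdivision.step G huv B hsub).finite hB
    exact (vertexBrittleness_le_subdivideEdge hC huv).trans (ih hB)

theorem vertexBrittleness_le_of_isTopMinor_general (C : GraphClass) (hC : IsIdeal C)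
    (V W : Type) [Fintype V] (G : SimpleGraph V) (G' : SimpleGraph W)
    (h : IsTopMinor G' G) :
    vertexBrittleness C G' ≤ vertexBrittleness C G := by
  obtain ⟨S, hS⟩ := h
  exact (hS.vertexBrittleness_le hC inferInstance).trans
    (vertexBrittleness_le_of_copy hC S.coeCopy)

/-- If `C` is an ideal and `G'` is a topological minor of `G`,
then `κ_C(G') ≤ κ_C(G)`. -/
theorem vertexBrittleness_le_of_isTopMinor (C : GraphClass) (hC : IsIdeal C)
    (V W : Type) [Fintype V] [Fintype W] (G : SimpleGraph V) (G' : SimpleGraph W)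
    (h : IsTopMinor G' G) :
    vertexBrittleness C G' ≤ vertexBrittleness C G :=
  vertexBrittleness_le_of_isTopMinor_general C hC V W G G' h
end

section
/- Let T be a finite tree and 𝒯 a family of subtrees of T. For every positive integer k, either there exist k pairwise vertex-disjoint members of 𝒯, or there is a set Z ⊆ V(T) with |Z| < k such that every member of 𝒯 contains a vertex of Z. -/
open Classical SimpleGraph

/-!
Root the tree at a vertex `r`. Every subtree `t` has a vertex `top t` closest to `r`, and the
path from `r` to any vertex of `t` runs through `top t`. Choose `t₀` whose top `z` is as deep
as possible. If a subtree `t` meets `t₀` in `w`, then `top t` and `z` both lie on the path from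
`r` to `w`, with `top t` no deeper than `z`; so `z` lies on the path from `top t` to `w`, which
stays inside `t`. Hence every member meeting `t₀` contains `z`, and induction on `k` applied to
the members avoiding `z` either extends a disjoint family by `t₀` or a transversal by `z`.
-/

namespace SimpleGraph.IsTree

variable {V : Type*} {T : SimpleGraph V}

theorem length_eq_dist_of_isPath (hT : T.IsTree) {u v : V} {p : T.Walk u v} (hp : p.IsPath) :
    p.length = T.dist u v := by
  obtain ⟨q, hq, hql⟩ := hT.connected.exists_path_of_dist u v
  rw [(hT.existsUnique_path u v).unique hp hq, hql]

theorem dist_add_dist_eq_iff_mem_support (hT : T.IsTree) {u v w : V} {p : T.Walk u w}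
    (hp : p.IsPath) : T.dist u v + T.dist v w = T.dist u w ↔ v ∈ p.support := by
  constructor
  · intro h
    obtain ⟨q₁, hq₁⟩ := hT.connected.exists_walk_length_eq_dist u v
    obtain ⟨q₂, hq₂⟩ := hT.connected.exists_walk_length_eq_dist v w
    have hq : (q₁.append q₂).length = T.dist u w := by rw [Walk.length_append, hq₁, hq₂, h]
    rw [(hT.existsUnique_path u w).unique hp ((q₁.append q₂).isPath_of_length_eq_dist hq)]
    exact (Walk.mem_support_append_iff q₁ q₂).2 (Or.inl q₁.end_mem_support)
  · intro hv
    have hlen := congrArg Walk.length (p.take_spec hv)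
    rw [Walk.length_append, hT.length_eq_dist_of_isPath (hp.takeUntil hv),
      hT.length_eq_dist_of_isPath (hp.dropUntil hv), hT.length_eq_dist_of_isPath hp] at hlen
    exact hlen

theorem mem_verts_of_dist_add_dist_eq (hT : T.IsTree) {t : T.Subgraph} (ht : t.Preconnected)
    {u v w : V} (hu : u ∈ t.verts) (hw : w ∈ t.verts)
    (h : T.dist u v + T.dist v w = T.dist u w) : v ∈ t.verts := by
  obtain ⟨p, hpt⟩ := (t.preconnected_iff_forall_exists_walk_subgraph.1 ht) hu hw
  have hv : v ∈ p.bypass.support := (hT.dist_add_dist_eq_iff_mem_support p.bypass_isPath).1 h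
  exact Subgraph.verts_mono hpt
    ((Walk.mem_verts_toSubgraph p).2 (p.support_bypass_subset_support hv))

theorem dist_add_dist_eq_of_forall_dist_le (hT : T.IsTree) {t : T.Subgraph}
    (ht : t.Preconnected) {r z v : V} (hz : z ∈ t.verts)
    (hmin : ∀ x ∈ t.verts, T.dist r z ≤ T.dist r x) (hv : v ∈ t.verts) :
    T.dist r z + T.dist z v = T.dist r v := by
  obtain ⟨p, hp, hpl⟩ := hT.connected.exists_path_of_dist r z
  obtain ⟨q, hq, hql⟩ := hT.connected.exists_path_of_dist z v
  have hz_tail : z ∉ q.support.tail := by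
    have := hq.support_nodup
    rw [← q.cons_tail_support, List.nodup_cons] at this
    exact this.1
  have hpq : (p.append q).IsPath := by
    rw [Walk.isPath_def, Walk.support_append, List.nodup_append]
    refine ⟨hp.support_nodup, hq.support_nodup.sublist (List.tail_sublist _), ?_⟩
    rintro a ha b hb rfl
    have hat : a ∈ t.verts := hT.mem_verts_of_dist_add_dist_eq ht hz hv
      ((hT.dist_add_dist_eq_iff_mem_support hq).2 (List.mem_of_mem_tail hb))
    have hra := (hT.dist_add_dist_eq_iff_mem_support hp).2 ha
    have haz : 0 < T.dist a z :=
      hT.connected.pos_dist_of_ne fun h => hz_tail (h ▸ hb)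
    have := hmin a hat
    omega
  rw [← hT.length_eq_dist_of_isPath hpq, Walk.length_append, hpl, hql]

theorem dist_add_dist_eq_of_dist_le (hT : T.IsTree) {r a b w : V}
    (ha : T.dist r a + T.dist a w = T.dist r w) (hb : T.dist r b + T.dist b w = T.dist r w)
    (hab : T.dist r a ≤ T.dist r b) : T.dist a b + T.dist b w = T.dist a w := by
  obtain ⟨P, hP, -⟩ := hT.connected.exists_path_of_dist r w
  have haP := (hT.dist_add_dist_eq_iff_mem_support hP).1 ha
  have hbP := (hT.dist_add_dist_eq_iff_mem_support hP).1 hb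
  rw [← P.take_spec haP, Walk.mem_support_append_iff] at hbP
  rcases hbP with hb₁ | hb₂
  · have hrb := (hT.dist_add_dist_eq_iff_mem_support (hP.takeUntil haP)).2 hb₁
    have hba : b = a := (hT.connected.dist_eq_zero_iff).1 (by omega)
    simp [hba]
  · exact (hT.dist_add_dist_eq_iff_mem_support (hP.dropUntil haP)).2 hb₂

theorem mem_verts_of_inter_nonempty (hT : T.IsTree) {s t : T.Subgraph} (hs : s.Preconnected)
    (ht : t.Preconnected) {r x z : V} (hz : z ∈ s.verts)
    (hzmin : ∀ v ∈ s.verts, T.dist r z ≤ T.dist r v) (hx : x ∈ t.verts)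
    (hxmin : ∀ v ∈ t.verts, T.dist r x ≤ T.dist r v) (hxz : T.dist r x ≤ T.dist r z)
    (hst : (t.verts ∩ s.verts).Nonempty) : z ∈ t.verts := by
  obtain ⟨w, hwt, hws⟩ := hst
  have hzw := hT.dist_add_dist_eq_of_forall_dist_le hs hz hzmin hws
  have hxw := hT.dist_add_dist_eq_of_forall_dist_le ht hx hxmin hwt
  exact hT.mem_verts_of_dist_add_dist_eq ht hx hwt (hT.dist_add_dist_eq_of_dist_le hxw hzw hxz)

theorem exists_vertex_mem_of_meets [Finite V] (hT : T.IsTree) (𝒮 : Set T.Subgraph)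
    (h𝒮 : ∀ t ∈ 𝒮, t.Connected) (hne : 𝒮.Nonempty) :
    ∃ s ∈ 𝒮, ∃ z ∈ s.verts, ∀ t ∈ 𝒮, (t.verts ∩ s.verts).Nonempty → z ∈ t.verts := by
  obtain ⟨r⟩ := hT.connected.nonempty
  let tops : Set (T.Subgraph × V) :=
    {p | p.1 ∈ 𝒮 ∧ p.2 ∈ p.1.verts ∧ ∀ v ∈ p.1.verts, T.dist r p.2 ≤ T.dist r v}
  have exists_top : ∀ t ∈ 𝒮, ∃ x, (t, x) ∈ tops := fun t ht => by
    obtain ⟨x, hx, hxmin⟩ :=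
      t.verts.exists_min_image (T.dist r) (Set.toFinite _) (h𝒮 t ht).nonempty
    exact ⟨x, ht, hx, hxmin⟩
  obtain ⟨s₀, hs₀⟩ := hne
  obtain ⟨x₀, hx₀⟩ := exists_top s₀ hs₀
  obtain ⟨⟨s, z⟩, ⟨hs, hz, hzmin⟩, hdeepest⟩ :=
    tops.exists_max_image (fun p => T.dist r p.2) (Set.toFinite _) ⟨_, hx₀⟩
  refine ⟨s, hs, z, hz, fun t ht hst => ?_⟩
  obtain ⟨x, hxt⟩ := exists_top t ht
  exact hT.mem_verts_of_inter_nonempty (h𝒮 s hs).preconnected (h𝒮 t ht).preconnected hz hzmin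
    hxt.2.1 hxt.2.2 (hdeepest _ hxt) hst

end SimpleGraph.IsTree

theorem exists_disjoint_or_transversal_of_exists_vertex_mem_of_meets {α V : Type*}
    (verts : α → Set V) (𝒯 : Set α)
    (hub : ∀ 𝒮 ⊆ 𝒯, 𝒮.Nonempty →
      ∃ s ∈ 𝒮, ∃ z ∈ verts s, ∀ t ∈ 𝒮, (verts t ∩ verts s).Nonempty → z ∈ verts t)
    (k : ℕ) :
    (∃ f : Fin k → α, (∀ i, f i ∈ 𝒯) ∧ ∀ i j, i ≠ j → Disjoint (verts (f i)) (verts (f j))) ∨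
    ∃ Z : Set V, Z.ncard < k ∧ ∀ t ∈ 𝒯, (verts t ∩ Z).Nonempty := by
  induction k generalizing 𝒯 with
  | zero => exact Or.inl ⟨Fin.elim0, fun i => i.elim0, fun i => i.elim0⟩
  | succ k ih =>
    rcases 𝒯.eq_empty_or_nonempty with rfl | hne
    · exact Or.inr ⟨∅, by simp, by simp⟩
    obtain ⟨s, hs, z, hz, hzs⟩ := hub 𝒯 subset_rfl hne
    rcases ih {t ∈ 𝒯 | z ∉ verts t} fun 𝒮 h𝒮 => hub 𝒮 (h𝒮.trans (Set.sep_subset _ _)) with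
      ⟨f, hf, hdisj⟩ | ⟨Z, hZ, hZ𝒯⟩
    · have hs_disj : ∀ j, Disjoint (verts s) (verts (f j)) := fun j =>
        Set.disjoint_left.2 fun v hvs hvf => (hf j).2 (hzs _ (hf j).1 ⟨v, hvf, hvs⟩)
      refine Or.inl ⟨Fin.cons s f, Fin.cases hs fun j => (hf j).1, ?_⟩
      intro i j hij
      cases i using Fin.cases <;> cases j using Fin.cases
      · exact absurd rfl hij
      · exact hs_disj _
      · exact (hs_disj _).symm
      · exact hdisj _ _ fun h => hij (congrArg Fin.succ h)
    · refine Or.inr ⟨insert z Z, (Set.ncard_insert_le z Z).trans_lt (by omega), fun t ht => ?_⟩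
      by_cases hzt : z ∈ verts t
      · exact ⟨z, hzt, Set.mem_insert z Z⟩
      · obtain ⟨v, hvt, hvZ⟩ := hZ𝒯 t ⟨ht, hzt⟩
        exact ⟨v, hvt, Set.mem_insert_of_mem z hvZ⟩

theorem subtrees_disjoint_or_transversal_general (V : Type) [Fintype V] (T : SimpleGraph V)
    (hT : T.IsTree) (𝒯 : Set T.Subgraph) (h𝒯 : ∀ t ∈ 𝒯, t.coe.Connected)
    (k : ℕ) :
    (∃ f : Fin k → T.Subgraph, (∀ i, f i ∈ 𝒯) ∧
      ∀ i j, i ≠ j → Disjoint (f i).verts (f j).verts) ∨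
    (∃ Z : Set V, Z.ncard < k ∧ ∀ t ∈ 𝒯, (t.verts ∩ Z).Nonempty) :=
  exists_disjoint_or_transversal_of_exists_vertex_mem_of_meets SimpleGraph.Subgraph.verts 𝒯
    (fun 𝒮 h𝒮 hne => hT.exists_vertex_mem_of_meets 𝒮 (fun t ht => ⟨h𝒯 t (h𝒮 ht)⟩) hne) k

/-- For a finite tree `T` and a family `𝒯` of subtrees of `T`, for every
positive `k`, either there are `k` pairwise vertex-disjoint members of `𝒯`, or some set
`Z` of fewer than `k` vertices meets every member of `𝒯`. -/
theorem subtrees_disjoint_or_transversal (V : Type) [Fintype V] (T : SimpleGraph V)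
    (hT : T.IsTree) (𝒯 : Set T.Subgraph) (h𝒯 : ∀ t ∈ 𝒯, t.coe.Connected)
    (k : ℕ) (hk : 0 < k) :
    (∃ f : Fin k → T.Subgraph, (∀ i, f i ∈ 𝒯) ∧
      ∀ i j, i ≠ j → Disjoint (f i).verts (f j).verts) ∨
    (∃ Z : Set V, Z.ncard < k ∧ ∀ t ∈ 𝒯, (t.verts ∩ Z).Nonempty) :=
  subtrees_disjoint_or_transversal_general V T hT 𝒯 h𝒯 k
end

section
/- There exists a function f(w,k) with the following property: for all positive integers w and k, if G is a graph of tree-width at most w and ℋ is a family of 2-connected subgraphs of G, then either (a) there exist a vertex v of G and members H₁,…,H_k of ℋ such that V(Hᵢ) ∩ V(Hⱼ) ⊆ {v} for all i ≠ j, or (b) there exists a set X ⊆ V(G) with |X| ≤ f(w,k) such that every member of ℋ contains at least two vertices of X. In fact f(w,k) = k(k−1)(w+1)² suffices. -/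
open Classical SimpleGraph

/-!
Fix a tree-decomposition `(T, β)` of width at most `w`, rooted at `r`. For a 2-connected `H`,
the nodes whose bags contain at least two vertices of `H` form a nonempty subtree `T_H`.
Choosing greedily the member whose subtree has the deepest top node gives `𝒟 ⊆ ℋ` with pairwise
disjoint subtrees such that the top nodes of `𝒟` meet every `T_H`.

If `|𝒟| ≤ k(k-1)(w+1)`, the union of the top bags of `𝒟` meets every member of `ℋ` twice.
Otherwise, two members `A ≠ B` of `𝒟` such that the top node of `B` is not deeper than that of
`A` meet only inside the top bag of `A`, hence in at most one vertex. Either some vertex lies in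
`k` members of `𝒟`, or each `A ∈ 𝒟` meets at most `(k-2)(w+1)` members whose top node is not
deeper than its own, and greedy selection by depth yields `k` pairwise disjoint members.
-/

namespace SimpleGraph.IsTree

variable {ι : Type} {T : SimpleGraph ι} (hT : T.IsTree)

noncomputable def path (a b : ι) : T.Walk a b :=
  (hT.existsUnique_path a b).exists.choose

lemma isPath_path (a b : ι) : (hT.path a b).IsPath :=
  (hT.existsUnique_path a b).exists.choose_spec

lemma eq_path {a b : ι} {p : T.Walk a b} (hp : p.IsPath) : p = hT.path a b :=
  (hT.existsUnique_path a b).unique hp (hT.isPath_path a b)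

lemma support_path_subset {a b : ι} (p : T.Walk a b) : (hT.path a b).support ⊆ p.support := by
  rw [← hT.eq_path p.bypass_isPath]
  exact p.support_bypass_subset_support

lemma path_eq_append {a b z : ι} (hz : z ∈ (hT.path a b).support) :
    hT.path a b = (hT.path a z).append (hT.path z b) := by
  rw [← hT.eq_path ((hT.isPath_path a b).takeUntil hz),
    ← hT.eq_path ((hT.isPath_path a b).dropUntil hz), Walk.take_spec]

noncomputable def depth (r x : ι) : ℕ := (hT.path r x).length

lemma depth_lt_of_mem_support {r x z : ι} (hz : z ∈ (hT.path r x).support) (hne : z ≠ x) :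
    hT.depth r z < hT.depth r x := by
  have hlen := congrArg Walk.length (hT.path_eq_append hz)
  have hpos : (hT.path z x).length ≠ 0 := fun h => hne (Walk.eq_of_length_eq_zero h)
  rw [Walk.length_append] at hlen
  unfold depth
  omega

lemma path_concat_or {r x y : ι} (h : T.Adj x y) :
    hT.path r y = (hT.path r x).concat h ∨ hT.path r x = (hT.path r y).concat h.symm := by
  by_cases hy : y ∈ (hT.path r x).support
  · right
    have hedge : (Walk.cons h.symm Walk.nil).IsPath := by simp [h.ne']
    rw [hT.path_eq_append hy, Walk.concat_eq_append, hT.eq_path hedge]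
  · left
    exact (hT.eq_path ((hT.isPath_path r x).concat hy h)).symm

def IsSubtree (S : Set ι) : Prop :=
  ∀ a ∈ S, ∀ b ∈ S, ∀ t ∈ (hT.path a b).support, t ∈ S

def IsTop (r : ι) (S : Set ι) (t : ι) : Prop :=
  t ∈ S ∧ ∀ x ∈ S, t ∈ (hT.path r x).support

lemma isSubtree_of_preconnected {S : Set ι} (hS : (T.induce S).Preconnected) :
    hT.IsSubtree S := by
  intro a ha b hb t ht
  obtain ⟨p⟩ := hS ⟨a, ha⟩ ⟨b, hb⟩
  have ht' := hT.support_path_subset (p.map (Embedding.induce S).toHom) ht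
  rw [Walk.support_map, List.mem_map] at ht'
  obtain ⟨t', -, rfl⟩ := ht'
  exact t'.2

lemma exists_isTop (r : ι) {S : Set ι} (hS : hT.IsSubtree S) (hne : S.Nonempty) :
    ∃ t, hT.IsTop r S t := by
  obtain ⟨t, htS, hmin⟩ : ∃ t ∈ S, ∀ x ∈ S, hT.depth r t ≤ hT.depth r x :=
    ⟨_, Function.argminOn_mem _ S hne, fun x hx => Function.argminOn_le _ S hx⟩
  refine ⟨t, htS, fun x hx => ?_⟩
  -- Follow a walk from `x` to `t` inside `S`: the path from `r` never steps past `t`, whose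
  -- depth is minimal on `S`.
  suffices h : ∀ {x} (p : T.Walk x t), (∀ z ∈ p.support, z ∈ S) → t ∈ (hT.path r x).support from
    h (hT.path x t) (hS x hx t htS)
  intro x p hp
  induction p with
  | nil => exact Walk.end_mem_support _
  | @cons x y t h p ih =>
    have hty := ih htS hmin fun z hz => hp z (List.mem_cons_of_mem _ hz)
    rcases hT.path_concat_or (r := r) h with he | he
    · rw [he, Walk.support_concat, List.mem_append, List.mem_singleton] at hty
      refine hty.resolve_right fun hyt => ?_
      subst hyt
      have hlen : hT.depth r t = hT.depth r x + 1 := by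
        rw [depth, depth, he, Walk.length_concat]
      have := hmin x (hp x (Walk.start_mem_support _))
      omega
    · rw [he, Walk.support_concat]
      exact List.mem_append_left _ hty

lemma mem_of_isTop_of_depth_le {r s u t : ι} {S : Set ι} (hS : hT.IsSubtree S)
    (hs : hT.IsTop r S s) (hu : u ∈ S) (ht : t ∈ (hT.path r u).support)
    (hd : hT.depth r s ≤ hT.depth r t) : t ∈ S := by
  by_cases hts : t = s
  · exact hts ▸ hs.1
  rw [hT.path_eq_append (hs.2 u hu), Walk.mem_support_append_iff] at ht
  rcases ht with ht | ht
  · exact absurd (hT.depth_lt_of_mem_support ht hts) (not_lt.2 hd)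
  · exact hS s hs.1 u hu t ht

/-- Greedy choice of a member with the deepest top node. -/
lemma exists_pairwiseDisjoint_tops_hitting (r : ι) {α : Type*} (F : Finset α) (S : α → Set ι)
    (top : α → ι) (hS : ∀ A ∈ F, hT.IsSubtree (S A)) (htop : ∀ A ∈ F, hT.IsTop r (S A) (top A)) :
    ∃ D ⊆ F, (D : Set α).PairwiseDisjoint S ∧ ∀ A ∈ F, ∃ B ∈ D, top B ∈ S A := by
  induction F using Finset.strongInduction with
  | H F ih =>
  rcases F.eq_empty_or_nonempty with rfl | hne
  · exact ⟨∅, Finset.empty_subset _, by simp, by simp⟩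
  obtain ⟨B, hB, hmax⟩ := F.exists_max_image (fun A => hT.depth r (top A)) hne
  have hF' : F.filter (fun A => top B ∉ S A) ⊂ F :=
    Finset.filter_ssubset.2 ⟨B, hB, not_not.2 (htop B hB).1⟩
  obtain ⟨D, hD, hdisj, hhit⟩ := ih _ hF' (fun A hA => hS A (Finset.mem_filter.1 hA).1)
    (fun A hA => htop A (Finset.mem_filter.1 hA).1)
  refine ⟨insert B D, Finset.insert_subset hB (hD.trans (Finset.filter_subset _ _)), ?_, ?_⟩
  · rw [Finset.coe_insert, Set.pairwiseDisjoint_insert]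
    refine ⟨hdisj, fun A hA _ => Set.disjoint_left.2 fun u huB huA => ?_⟩
    obtain ⟨hAF, hBA⟩ := Finset.mem_filter.1 (hD hA)
    exact hBA (hT.mem_of_isTop_of_depth_le (hS A hAF) (htop A hAF) huA
      ((htop B hB).2 u huB) (hmax A hAF))
  · intro A hA
    by_cases h : top B ∈ S A
    · exact ⟨B, Finset.mem_insert_self _ _, h⟩
    · obtain ⟨C, hC, hCA⟩ := hhit A (Finset.mem_filter.2 ⟨hA, h⟩)
      exact ⟨C, Finset.mem_insert_of_mem hC, hCA⟩

end SimpleGraph.IsTree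

open Finset in
/-- Greedy selection of a member with maximal `d`. -/
lemma Finset.exists_pairwiseDisjoint_of_degenerate {α W : Type*} (S : α → Set W) (d : α → ℕ)
    (c : ℕ) (D : Finset α)
    (hdeg : ∀ A ∈ D, #{B ∈ D | B ≠ A ∧ d B ≤ d A ∧ ¬Disjoint (S A) (S B)} ≤ c)
    (n : ℕ) (hn : n * (c + 1) ≤ #D + c) :
    ∃ E ⊆ D, #E = n ∧ (E : Set α).PairwiseDisjoint S := by
  induction n generalizing D with
  | zero => exact ⟨∅, empty_subset _, card_empty, by simp⟩
  | succ n ih =>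
  have hne : D.Nonempty := card_pos.1 (by rw [Nat.succ_mul] at hn; omega)
  obtain ⟨A, hA, hmax⟩ := D.exists_max_image d hne
  set N := {B ∈ D | B ≠ A ∧ d B ≤ d A ∧ ¬Disjoint (S A) (S B)}
  have hAN : insert A N ⊆ D := insert_subset hA (filter_subset _ _)
  have hcard := card_sdiff_add_card_eq_card hAN
  have hdeg' : ∀ B ∈ D \ insert A N,
      #{C ∈ D \ insert A N | C ≠ B ∧ d C ≤ d B ∧ ¬Disjoint (S B) (S C)} ≤ c :=
    fun B hB => (card_le_card (filter_subset_filter _ sdiff_subset)).trans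
      (hdeg B (mem_sdiff.1 hB).1)
  obtain ⟨E, hE, hEn, hEd⟩ := ih (D \ insert A N) hdeg' (by
    have := card_insert_le A N
    have : #N ≤ c := hdeg A hA
    rw [Nat.succ_mul] at hn
    omega)
  have hAE : A ∉ E := fun h => (mem_sdiff.1 (hE h)).2 (mem_insert_self _ _)
  refine ⟨insert A E, insert_subset hA (hE.trans sdiff_subset),
    by rw [card_insert_of_notMem hAE, hEn], ?_⟩
  rw [coe_insert, Set.pairwiseDisjoint_insert]
  refine ⟨hEd, fun B hB hAB => by_contra fun h => ?_⟩
  obtain ⟨hBD, hBN⟩ := mem_sdiff.1 (hE hB)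
  exact hBN (mem_insert_of_mem (mem_filter.2 ⟨hBD, Ne.symm hAB, hmax B hBD, h⟩))

open Finset in
lemma exists_flower {α W : Type*} [Fintype W] [Nonempty W] (S bag : α → Set W) (d : α → ℕ)
    {m : ℕ} (hm : 0 < m) (k : ℕ) (D : Finset α) (hbag : ∀ A ∈ D, (bag A).ncard ≤ m)
    (hmeet : ∀ A ∈ D, ∀ B ∈ D, A ≠ B → d B ≤ d A → S A ∩ S B ⊆ bag A)
    (hsub : ∀ A ∈ D, ∀ B ∈ D, A ≠ B → (S A ∩ S B).Subsingleton) (hD : k * (k - 1) * m < #D) :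
    ∃ v, ∃ E ⊆ D, #E = k ∧ ∀ A ∈ E, ∀ B ∈ E, A ≠ B → S A ∩ S B ⊆ {v} := by
  by_cases heavy : ∃ v, k ≤ #{A ∈ D | v ∈ S A}
  · obtain ⟨v, hv⟩ := heavy
    obtain ⟨E, hE, hEk⟩ := exists_subset_card_eq hv
    refine ⟨v, E, hE.trans (filter_subset _ _), hEk, fun A hA B hB hAB x hx => ?_⟩
    have hvA := (mem_filter.1 (hE hA)).2
    have hvB := (mem_filter.1 (hE hB)).2
    exact hsub A (filter_subset _ _ (hE hA)) B (filter_subset _ _ (hE hB)) hAB hx ⟨hvA, hvB⟩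
  push Not at heavy
  -- A member `B` with `d B ≤ d A` meets `A` at a vertex of `bag A ∩ S A`, and each such vertex
  -- lies in at most `k - 2` members other than `A`.
  have hdeg : ∀ A ∈ D, #{B ∈ D | B ≠ A ∧ d B ≤ d A ∧ ¬Disjoint (S A) (S B)} ≤ (k - 2) * m := by
    intro A hA
    calc _ ≤ #((bag A ∩ S A).toFinset.biUnion fun x => {B ∈ D | x ∈ S B}.erase A) := by
          refine card_le_card fun B hB => ?_
          obtain ⟨hBD, hBA, hd, hAB⟩ := mem_filter.1 hB
          obtain ⟨x, hxA, hxB⟩ := Set.not_disjoint_iff.1 hAB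
          exact mem_biUnion.2 ⟨x, Set.mem_toFinset.2 ⟨hmeet A hA B hBD (Ne.symm hBA) hd ⟨hxA, hxB⟩,
            hxA⟩, mem_erase.2 ⟨hBA, mem_filter.2 ⟨hBD, hxB⟩⟩⟩
      _ ≤ #(bag A ∩ S A).toFinset * (k - 2) := by
          refine card_biUnion_le_card_mul _ _ _ fun x hx => ?_
          rw [card_erase_of_mem (mem_filter.2 ⟨hA, (Set.mem_toFinset.1 hx).2⟩)]
          have := heavy x
          omega
      _ ≤ (k - 2) * m := by
          rw [mul_comm, ← Set.ncard_eq_toFinset_card']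
          exact Nat.mul_le_mul_left _
            ((Set.ncard_le_ncard Set.inter_subset_left).trans (hbag A hA))
  obtain ⟨E, hE, hEk, hEd⟩ := exists_pairwiseDisjoint_of_degenerate S d _ D hdeg k (by
    rcases k with _ | _ | j
    · simp
    · simp only [zero_add, tsub_self, mul_zero, zero_mul, one_mul] at hD ⊢
      omega
    · rw [show j + 1 + 1 - 1 = j + 1 by omega] at hD
      rw [show j + 1 + 1 - 2 = j by omega]
      nlinarith [Nat.mul_le_mul_left (j + 1) hm])
  refine ⟨Classical.arbitrary W, E, hE, hEk, fun A hA B hB hAB => ?_⟩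
  rw [(hEd hA hB hAB).inter_eq]
  exact Set.empty_subset _

lemma TwoConnected.nonempty {W : Type} {H : SimpleGraph W} (h : TwoConnected H) : Nonempty W :=
  (Nat.card_pos_iff.1 (by have := h.1; omega)).1

lemma TwoConnected.exists_adj {W : Type} {H : SimpleGraph W} (h : TwoConnected H) (u : W) :
    ∃ u', H.Adj u u' := by
  have : Finite W := Nat.finite_of_card_ne_zero (by have := h.1; omega)
  obtain ⟨v, hvu⟩ : ∃ v, v ≠ u := by
    have : Nontrivial W := Finite.one_lt_card_iff_nontrivial.1 (by have := h.1; omega)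
    exact exists_ne u
  obtain ⟨z, hz⟩ : (({u, v} : Set W)ᶜ).Nonempty := by
    rw [Set.nonempty_compl]
    intro huniv
    have := Set.ncard_pair hvu.symm
    rw [huniv, Set.ncard_univ] at this
    have := h.1
    omega
  simp only [Set.mem_compl_iff, Set.mem_insert_iff, Set.mem_singleton_iff, not_or] at hz
  have : Nontrivial {x | x ≠ v} := Set.nontrivial_coe_sort.2 ⟨u, hvu.symm, z, hz.2, Ne.symm hz.1⟩
  obtain ⟨u', hu'⟩ := (h.2 v).preconnected.exists_adj_of_nontrivial ⟨u, hvu.symm⟩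
  exact ⟨u', hu'⟩

structure IsTreeDecomposition {V ι : Type} (G : SimpleGraph V) (T : SimpleGraph ι)
    (β : ι → Set V) : Prop where
  isTree : T.IsTree
  exists_bag_of_adj : ∀ u v, G.Adj u v → ∃ t, u ∈ β t ∧ v ∈ β t
  connected_nodes : ∀ v, (T.induce {t | v ∈ β t}).Connected

def nodesMeetingTwice {V ι : Type} {G : SimpleGraph V} (β : ι → Set V) (H : G.Subgraph) :
    Set ι :=
  {t | 2 ≤ (β t ∩ H.verts).ncard}

namespace IsTreeDecomposition

variable {V ι : Type} {G : SimpleGraph V} {T : SimpleGraph ι} {β : ι → Set V}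
  (hD : IsTreeDecomposition G T β)
include hD

lemma isSubtree_nodes (v : V) : hD.isTree.IsSubtree {t | v ∈ β t} :=
  hD.isTree.isSubtree_of_preconnected (hD.connected_nodes v).preconnected

lemma notMem_path_of_walk {t : ι} {u u' : V} (p : G.Walk u u') (hp : ∀ z ∈ p.support, z ∉ β t)
    {a b : ι} (ha : u ∈ β a) (hb : u' ∈ β b) : t ∉ (hD.isTree.path a b).support := by
  induction p generalizing a with
  | nil => exact fun ht => hp _ (Walk.start_mem_support _) (hD.isSubtree_nodes _ a ha b hb t ht)
  | cons h p ih =>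
    obtain ⟨s, hus, hcs⟩ := hD.exists_bag_of_adj _ _ h
    have has : t ∉ (hD.isTree.path a s).support := fun ht =>
      hp _ (Walk.start_mem_support _) (hD.isSubtree_nodes _ a ha s hus t ht)
    have hsb := ih (fun z hz => hp z (List.mem_cons_of_mem _ hz)) hcs hb
    intro ht
    have := hD.isTree.support_path_subset ((hD.isTree.path a s).append (hD.isTree.path s b)) ht
    rw [Walk.mem_support_append_iff] at this
    exact this.elim has hsb

variable [Finite V] {H : G.Subgraph}

lemma exists_mem_nodesMeetingTwice (hH : TwoConnected H.coe) {u : V} (hu : u ∈ H.verts) :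
    ∃ t ∈ nodesMeetingTwice β H, u ∈ β t := by
  obtain ⟨⟨u', hu'H⟩, hadj⟩ := hH.exists_adj (⟨u, hu⟩ : H.verts)
  obtain ⟨t, hut, hu't⟩ := hD.exists_bag_of_adj _ _ (H.adj_sub hadj)
  refine ⟨t, ?_, hut⟩
  calc 2 = ({u, u'} : Set V).ncard := (Set.ncard_pair (Subgraph.Adj.ne hadj)).symm
    _ ≤ (β t ∩ H.verts).ncard := Set.ncard_le_ncard (Set.insert_subset ⟨hut, hu⟩
      (Set.singleton_subset_iff.2 ⟨hu't, hu'H⟩))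

lemma nodesMeetingTwice_nonempty (hH : TwoConnected H.coe) : (nodesMeetingTwice β H).Nonempty :=
  have ⟨⟨_, hu⟩⟩ := hH.nonempty
  have ⟨t, ht, _⟩ := hD.exists_mem_nodesMeetingTwice hH hu
  ⟨t, ht⟩

/-- A node `t` between two nodes of `T_H` whose bag meets `H` in at most one vertex `x` would
separate the connected graph `H - x`. -/
lemma isSubtree_nodesMeetingTwice (hH : TwoConnected H.coe) :
    hD.isTree.IsSubtree (nodesMeetingTwice β H) := by
  intro a ha b hb t ht
  by_contra htH
  have h1 : (β t ∩ H.verts).ncard ≤ 1 := by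
    have : ¬2 ≤ (β t ∩ H.verts).ncard := htH
    omega
  obtain ⟨x, hxH, hx⟩ : ∃ x ∈ H.verts, β t ∩ H.verts ⊆ {x} := by
    rcases (Set.ncard_le_one_iff_eq (Set.toFinite _)).1 h1 with h | ⟨x, hx⟩
    · obtain ⟨⟨x, hxH⟩⟩ := hH.nonempty
      exact ⟨x, hxH, h ▸ Set.empty_subset _⟩
    · exact ⟨x, (hx.ge rfl).2, hx.le⟩
  obtain ⟨ua, ⟨hua, huaH⟩, huax⟩ := Set.exists_ne_of_one_lt_ncard ha x
  obtain ⟨ub, ⟨hub, hubH⟩, hubx⟩ := Set.exists_ne_of_one_lt_ncard hb x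
  obtain ⟨p⟩ := (hH.2 ⟨x, hxH⟩).preconnected
    ⟨⟨ua, huaH⟩, fun h => huax (congrArg Subtype.val h)⟩
    ⟨⟨ub, hubH⟩, fun h => hubx (congrArg Subtype.val h)⟩
  refine hD.notMem_path_of_walk (p.map (H.hom.comp (Embedding.induce _).toHom)) ?_ hua hub ht
  rw [Walk.support_map]
  intro z hz hzt
  obtain ⟨y, -, rfl⟩ := List.mem_map.1 hz
  exact y.2 (Subtype.ext (hx ⟨hzt, y.1.2⟩))

variable {A B : G.Subgraph} (r : ι)

lemma inter_verts_subset_bag (hA : TwoConnected A.coe) (hB : TwoConnected B.coe)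
    (hAB : Disjoint (nodesMeetingTwice β A) (nodesMeetingTwice β B)) {a b : ι}
    (ha : hD.isTree.IsTop r (nodesMeetingTwice β A) a)
    (hb : hD.isTree.IsTop r (nodesMeetingTwice β B) b)
    (hd : hD.isTree.depth r b ≤ hD.isTree.depth r a) : A.verts ∩ B.verts ⊆ β a := by
  rintro v ⟨hvA, hvB⟩
  obtain ⟨s, hsA, hvs⟩ := hD.exists_mem_nodesMeetingTwice hA hvA
  obtain ⟨s', hs'B, hvs'⟩ := hD.exists_mem_nodesMeetingTwice hB hvB
  have has := hD.isTree.support_path_subset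
    ((hD.isTree.path r s').append (hD.isTree.path s' s)) (ha.2 s hsA)
  rw [Walk.mem_support_append_iff] at has
  rcases has with has | has
  · exact absurd (hD.isTree.mem_of_isTop_of_depth_le (hD.isSubtree_nodesMeetingTwice hB) hb hs'B
      has hd) (Set.disjoint_left.1 hAB ha.1)
  · exact hD.isSubtree_nodes v s' hvs' s hvs a has

lemma subsingleton_inter_verts (hA : TwoConnected A.coe) (hB : TwoConnected B.coe)
    (hAB : Disjoint (nodesMeetingTwice β A) (nodesMeetingTwice β B)) {a b : ι}
    (ha : hD.isTree.IsTop r (nodesMeetingTwice β A) a)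
    (hb : hD.isTree.IsTop r (nodesMeetingTwice β B) b) : (A.verts ∩ B.verts).Subsingleton := by
  wlog hd : hD.isTree.depth r b ≤ hD.isTree.depth r a generalizing A B a b
  · rw [Set.inter_comm]
    exact this hB hA hAB.symm hb ha (le_of_not_ge hd)
  intro x hx y hy
  by_contra hxy
  have hsub := hD.inter_verts_subset_bag r hA hB hAB ha hb hd
  refine Set.disjoint_left.1 hAB ha.1 ?_
  calc 2 = ({x, y} : Set V).ncard := (Set.ncard_pair hxy).symm
    _ ≤ (β a ∩ B.verts).ncard := Set.ncard_le_ncard (Set.insert_subset ⟨hsub hx, hx.2⟩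
      (Set.singleton_subset_iff.2 ⟨hsub hy, hy.2⟩))

open Finset in
lemma exists_flower_of_pairwiseDisjoint {w : ℕ} (hwidth : ∀ t, (β t).ncard ≤ w + 1) (k : ℕ)
    (𝒟 : Finset G.Subgraph) (h2c : ∀ H ∈ 𝒟, TwoConnected H.coe)
    (hdisj : (𝒟 : Set G.Subgraph).PairwiseDisjoint (nodesMeetingTwice β)) (top : G.Subgraph → ι)
    (htop : ∀ H ∈ 𝒟, hD.isTree.IsTop r (nodesMeetingTwice β H) (top H))
    (hsize : k * (k - 1) * (w + 1) < #𝒟) :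
    ∃ v, ∃ E ⊆ 𝒟, #E = k ∧ ∀ A ∈ E, ∀ B ∈ E, A ≠ B → A.verts ∩ B.verts ⊆ {v} := by
  have := Fintype.ofFinite V
  obtain ⟨H₀, hH₀⟩ := card_pos.1 (by omega : 0 < #𝒟)
  have : Nonempty V := have ⟨⟨v, _⟩⟩ := (h2c H₀ hH₀).nonempty; ⟨v⟩
  exact exists_flower (fun H : G.Subgraph => H.verts) (fun H => β (top H))
    (fun H => hD.isTree.depth r (top H)) (by omega : 0 < w + 1) k 𝒟 (fun _ _ => hwidth _)
    (fun A hA B hB hAB => hD.inter_verts_subset_bag r (h2c A hA) (h2c B hB) (hdisj hA hB hAB)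
      (htop A hA) (htop B hB))
    (fun A hA B hB hAB => hD.subsingleton_inter_verts r (h2c A hA) (h2c B hB) (hdisj hA hB hAB)
      (htop A hA) (htop B hB))
    hsize

end IsTreeDecomposition

theorem twoConnected_families_in_bounded_treewidth_general (w k : ℕ)
    (V : Type) [Fintype V] (G : SimpleGraph V) (hG : HasTreewidthLE G w)
    (ℋ : Set G.Subgraph) (h2c : ∀ H ∈ ℋ, TwoConnected H.coe) :
    (∃ (v : V) (H : Fin k → G.Subgraph), (∀ i, H i ∈ ℋ) ∧
      ∀ i j, i ≠ j → (H i).verts ∩ (H j).verts ⊆ {v}) ∨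
    (∃ X : Set V, X.ncard ≤ k * (k - 1) * (w + 1) ^ 2 ∧
      ∀ H ∈ ℋ, 2 ≤ (H.verts ∩ X).ncard) := by
  obtain ⟨ι, -, T, β, hT, hadj, hconn, hwidth⟩ := hG
  have hD : IsTreeDecomposition G T β := ⟨hT, hadj, hconn⟩
  have : Nonempty ι := hT.connected.nonempty
  let r : ι := Classical.arbitrary ι
  have h2c' : ∀ H ∈ ℋ.toFinite.toFinset, TwoConnected H.coe := by simpa using h2c
  choose! top htop using fun H hH => hT.exists_isTop r
    (hD.isSubtree_nodesMeetingTwice (h2c' H hH)) (hD.nodesMeetingTwice_nonempty (h2c' H hH))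
  obtain ⟨𝒟, h𝒟, hdisj, hhit⟩ := hT.exists_pairwiseDisjoint_tops_hitting r _
    (nodesMeetingTwice β) top (fun H hH => hD.isSubtree_nodesMeetingTwice (h2c' H hH)) htop
  by_cases hsize : 𝒟.card ≤ k * (k - 1) * (w + 1)
  · refine .inr ⟨⋃ B ∈ 𝒟, β (top B), ?_, fun H hH => ?_⟩
    · calc _ ≤ ∑ B ∈ 𝒟, (β (top B)).ncard := 𝒟.set_ncard_biUnion_le _
        _ ≤ 𝒟.card * (w + 1) := Finset.sum_le_card_nsmul _ _ _ fun B _ => hwidth _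
        _ ≤ _ := by rw [sq, ← mul_assoc]; gcongr
    · obtain ⟨B, hB, hBH⟩ := hhit H (by simpa using hH)
      exact hBH.trans (Set.ncard_le_ncard fun z hz => ⟨hz.2, Set.mem_biUnion hB hz.1⟩)
  · obtain ⟨v, E, hE, hEk, hflower⟩ := hD.exists_flower_of_pairwiseDisjoint r hwidth k 𝒟
      (fun H hH => h2c' H (h𝒟 hH)) hdisj top (fun H hH => htop H (h𝒟 hH)) (by omega)
    let e := (E.equivFinOfCardEq hEk).symm
    refine .inl ⟨v, fun i => e i, fun i => by simpa using h𝒟 (hE (e i).2), fun i j hij => ?_⟩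
    exact hflower _ (e i).2 _ (e j).2 fun h => hij (e.injective (Subtype.ext h))

/-- For a graph `G` of tree-width at most `w` and a family `ℋ` of
2-connected subgraphs of `G`, either `k` members of `ℋ` pairwise meet in at most one
common vertex `v`, or a set `X` of at most `k(k-1)(w+1)²` vertices meets every member
of `ℋ` in at least two vertices. -/
theorem twoConnected_families_in_bounded_treewidth (w k : ℕ) (hw : 0 < w) (hk : 0 < k)
    (V : Type) [Fintype V] (G : SimpleGraph V) (hG : HasTreewidthLE G w)
    (ℋ : Set G.Subgraph) (h2c : ∀ H ∈ ℋ, TwoConnected H.coe) :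
    (∃ (v : V) (H : Fin k → G.Subgraph), (∀ i, H i ∈ ℋ) ∧
      ∀ i j, i ≠ j → (H i).verts ∩ (H j).verts ⊆ {v}) ∨
    (∃ X : Set V, X.ncard ≤ k * (k - 1) * (w + 1) ^ 2 ∧
      ∀ H ∈ ℋ, 2 ≤ (H.verts ∩ X).ncard) :=
  twoConnected_families_in_bounded_treewidth_general w k V G hG ℋ h2c
end

section
/- Let G be a graph, 𝒞 a monotone class of graphs, and P a path in G such that the subgraph of G induced by V(P) does not belong to 𝒞. Let (G',P') = σ(G,P). Then η_𝒞(G') ≥ η_𝒞(G) + 1. -/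
open Classical SimpleGraph

/-!
Restrict a labelling of `σ(G,P)` to `V(G)`. Every part of the restriction is a subgraph of a
part of the original labelling, and every crossing edge of the restriction crosses in `σ(G,P)`.
If none of the edges at the new vertices `uᵢ` crossed, consecutive vertices of `P` would share
their label, so `G[V(P)]` would lie inside a single part and hence in `𝒞`. So some edge at a new
vertex crosses, and it is counted on top of the crossing edges of the restriction.
-/

lemma ClosedUnderSubgraphs.of_isContained {C : GraphClass} (hsub : ClosedUnderSubgraphs C)
    (hiso : ClosedUnderIso C) {V W : Type} {A : SimpleGraph V} {B : SimpleGraph W} (h : A ⊑ B)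
    (hB : C W B) : C V A := by
  obtain ⟨B', ⟨e⟩⟩ := h.exists_iso_subgraph
  exact hiso _ _ ⟨e.symm⟩ (hsub B B' hB)

lemma SimpleGraph.Copy.induce_isContained_induce {V W : Type} {G : SimpleGraph V}
    {H : SimpleGraph W} (φ : Copy G H) {s : Set V} {t : Set W} (hst : Set.MapsTo φ s t) :
    G.induce s ⊑ H.induce t :=
  ⟨(induceHom φ.toHom hst).toCopy (induceHom_injective _ _ φ.injective.injOn)⟩

lemma SimpleGraph.Walk.apply_eq_of_apply_getVert_succ {V α : Type} {G : SimpleGraph V}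
    {a b : V} (P : G.Walk a b) (g : V → α)
    (h : ∀ i < P.length, g (P.getVert (i + 1)) = g (P.getVert i)) :
    ∀ v ∈ P.support, g v = g a := by
  have hprefix : ∀ j ≤ P.length, g (P.getVert j) = g a := by
    intro j
    induction j with
    | zero => simp
    | succ j ih => intro hj; rw [h j (by omega), ih (by omega)]
  intro v hv
  obtain ⟨j, rfl, hj⟩ := P.mem_support_iff_exists_getVert.mp hv
  exact hprefix j hj

section CrossEdges

variable {V W : Type} {G : SimpleGraph V} {H : SimpleGraph W}

lemma crossEdges_comp_subset (φ : G →g H) (f : W → ℕ) :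
    Sym2.map φ '' crossEdges G (f ∘ φ) ⊆ crossEdges H f := by
  rintro _ ⟨_, ⟨huv, u, v, rfl, hne⟩, rfl⟩
  exact ⟨φ.map_adj huv, φ u, φ v, rfl, hne⟩

lemma ncard_crossEdges_comp_lt [Finite W] (φ : Copy G H) (f : W → ℕ) {e : Sym2 W}
    (he : e ∈ crossEdges H f) (heφ : e ∉ Set.range (Sym2.map φ)) :
    (crossEdges G (f ∘ φ)).ncard < (crossEdges H f).ncard := by
  rw [← Set.ncard_image_of_injective _ (Sym2.map.injective φ.injective)]
  refine Set.ncard_lt_ncard ?_ (Set.toFinite _)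
  exact (Set.ssubset_iff_of_subset (crossEdges_comp_subset φ.toHom f)).mpr
    ⟨e, he, fun ⟨e', _, he'⟩ => heφ ⟨e', he'⟩⟩

end CrossEdges

section Sigma

variable {V : Type} {G : SimpleGraph V} {a b : V} {P : G.Walk a b}

lemma sigmaGraph_adj_inl_inl {p q : V} :
    (sigmaGraph G P).Adj (Sum.inl p) (Sum.inl q) ↔ G.Adj p q := by
  simp only [sigmaGraph, fromRel_adj]
  grind [G.adj_symm, G.ne_of_adj]

lemma sigmaGraph_adj_inl_inr {p : V} {i : Fin P.length}
    (h : p = P.getVert i ∨ p = P.getVert (i + 1)) :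
    (sigmaGraph G P).Adj (Sum.inl p) (Sum.inr i) :=
  ⟨by simp, Or.inl (Or.inr ⟨p, i, rfl, rfl, h⟩)⟩

def sigmaGraphInl : G ↪g sigmaGraph G P :=
  ⟨Function.Embedding.inl, sigmaGraph_adj_inl_inl⟩

lemma exists_inr_mem_crossEdges_sigmaGraph {f : V ⊕ Fin P.length → ℕ}
    (hf : ¬ ∀ v ∈ P.support, f (Sum.inl v) = f (Sum.inl a)) :
    ∃ i : Fin P.length, ∃ e ∈ crossEdges (sigmaGraph G P) f, Sum.inr i ∈ e := by
  by_contra! hno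
  have hcross (p : V) (i : Fin P.length) (h : p = P.getVert i ∨ p = P.getVert (i + 1)) :
      f (Sum.inl p) = f (Sum.inr i) := by
    by_contra hne
    exact hno i _ ⟨sigmaGraph_adj_inl_inr h, _, _, rfl, hne⟩ (Sym2.mem_mk_right _ _)
  refine hf (P.apply_eq_of_apply_getVert_succ (f ∘ Sum.inl) fun i hi => ?_)
  exact (hcross _ ⟨i, hi⟩ (Or.inr rfl)).trans (hcross _ ⟨i, hi⟩ (Or.inl rfl)).symm

end Sigma

theorem edgeBrittleness_sigma_general (C : GraphClass)
    (hiso : ClosedUnderIso C) (hsub : ClosedUnderSubgraphs C)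
    (V : Type) [Fintype V] (G : SimpleGraph V) (a b : V) (P : G.Walk a b)
    (hPC : ¬ C ↥{v : V | v ∈ P.support} (G.induce {v : V | v ∈ P.support})) :
    edgeBrittleness C G + 1 ≤ edgeBrittleness C (sigmaGraph G P) := by
  refine le_sInf ?_
  rintro _ ⟨f, hparts, rfl⟩
  let φ : Copy G (sigmaGraph G P) := sigmaGraphInl.toCopy
  have hrestrict (i : ℕ) : C _ (G.induce ((f ∘ φ) ⁻¹' {i})) :=
    hsub.of_isContained hiso (φ.induce_isContained_induce fun _ hv => hv) (hparts i)
  have hnotconst : ¬ ∀ v ∈ P.support, f (Sum.inl v) = f (Sum.inl a) := fun hconst =>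
    hPC <| hsub.of_isContained hiso
      (φ.induce_isContained_induce (t := f ⁻¹' {f (Sum.inl a)}) hconst) (hparts _)
  obtain ⟨i, e, he, hie⟩ := exists_inr_mem_crossEdges_sigmaGraph hnotconst
  have heφ : e ∉ Set.range (Sym2.map φ) := by
    rintro ⟨e', rfl⟩
    obtain ⟨v, -, hv⟩ := Sym2.mem_map.mp hie
    exact Sum.inl_ne_inr hv
  calc edgeBrittleness C G + 1 ≤ ((crossEdges G (f ∘ φ)).ncard : ℕ∞) + 1 := by
        gcongr
        exact sInf_le ⟨_, hrestrict, rfl⟩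
    _ ≤ (crossEdges (sigmaGraph G P) f).ncard := by
        exact_mod_cast ncard_crossEdges_comp_lt φ f he heφ

/-- If `C` is monotone, `P` is a path of `G` whose vertex set induces a
subgraph not in `C`, and `(G',P') = σ(G,P)`, then `η_C(G') ≥ η_C(G) + 1`. -/
theorem edgeBrittleness_sigma (C : GraphClass)
    (hiso : ClosedUnderIso C) (hsub : ClosedUnderSubgraphs C)
    (V : Type) [Fintype V] (G : SimpleGraph V) (a b : V) (P : G.Walk a b)
    (hP : P.IsPath)
    (hPC : ¬ C ↥{v : V | v ∈ P.support} (G.induce {v : V | v ∈ P.support})) :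
    edgeBrittleness C G + 1 ≤ edgeBrittleness C (sigmaGraph G P) :=
  edgeBrittleness_sigma_general C hiso hsub V G a b P hPC
end
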